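/- arXiv:1508.02115 — 3 statements merged into one kernel-verified Lean document; each statement's English description precedes it below -/
import Mathlib

section
/- Let 𝒜 be an A∞ category over a field k of characteristic zero satisfying Assumption (★) with parameter d, and let {{−,−}} be the bracket on B̃(𝒜)^∨ defined by {{f,g}}((a_m,…,a₁),(b_n,…,b₁)) = Σ_{i,j} Σ_p (−1)^{ε_{ij}} sgn(p,p*) f(b_n,…,b_j,p,a_{i−1},…,a₁) g(a_m,…,a_i,p*,b_{j−1},…,b₁). Then {{−,−}} has degree 2−d and is graded skew-symmetric: {{f,g}} = −(−1)^{(|f|+d)(|g|+d)} {{g,f}}°, where (u⊗v)° = (−1)^{|u||v|} v⊗u. -/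
/-!
Formalization framework: a "based" A∞ category over a field `k` of characteristic
zero.  Morphism spaces `H̄om(A,B)` (gradings already shifted down by one) are given
by a homogeneous basis: `E` is the set of all basis elements ("arrows"), with
source, target and (shifted) degree.  The shifted A∞ operations `m̄ₙ` are recorded
through their structure constants: for a composable word `w = [a₁,…,aₙ]`
(written right-to-left, i.e. `a₁` is the first morphism to be composed),
`m w : E →₀ k` is `m̄ₙ(āₙ,…,ā₁)` expanded in the basis.

The Hochschild chain space `CH_•(𝒜)` is the span, inside the free module
`List E →₀ k`, of the cyclically composable nonempty words; the reduced bar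
construction `B̃(𝒜)` is the span of the composable nonempty words.
-/

set_option maxSynthPendingDepth 3

open Finsupp TensorProduct

namespace AIC

/-- The sign `(−1)^z` for an integer `z`. -/
def psign (z : ℤ) : ℤ := if Even z then 1 else -1

/-- A based A∞ category over `k`: objects, homogeneous basis arrows of the
(degree-shifted) morphism spaces, and structure constants of the shifted
operations `m̄ₙ`. -/
structure AInftyCat (k : Type) [Field k] where
  Ob : Type
  E : Type
  src : E → Ob
  tgt : E → Ob
  deg : E → ℤ
  m : List E → (E →₀ k)

namespace AInftyCat

variable {k : Type} [Field k] (𝒜 : AInftyCat k)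

/-- A word `[a₁,…,aₙ]` is (linearly) composable if `tgt aᵢ = src aᵢ₊₁`. -/
def Composable (w : List 𝒜.E) : Prop := w.Chain' fun x y => 𝒜.tgt x = 𝒜.src y

/-- A nonempty composable word which closes up cyclically; these index the
basis of the Hochschild chain space. -/
def Cyclic (w : List 𝒜.E) : Prop :=
  ∃ h : w ≠ [], 𝒜.Composable w ∧ 𝒜.tgt (w.getLast h) = 𝒜.src (w.head h)

/-- Total (shifted) degree of a word. -/
def degsum (w : List 𝒜.E) : ℤ := (w.map 𝒜.deg).sum

/-- The A∞ axioms: each `m̄ₙ` has degree `+1` and respects sources and targets,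
and the (shifted, Koszul-signed) A∞ relations hold: for every nonempty composable
word `w`,
`∑_{p,l} (−1)^{|ā₁|+⋯+|ā_p|} m̄(āₙ,…, m̄(block),…, ā₁) = 0`. -/
structure IsAInfty : Prop where
  m_support : ∀ (w : List 𝒜.E) (hw : w ≠ []), 𝒜.Composable w → ∀ q : 𝒜.E,
    𝒜.m w q ≠ 0 →
      𝒜.src q = 𝒜.src (w.head hw) ∧ 𝒜.tgt q = 𝒜.tgt (w.getLast hw) ∧
        𝒜.deg q = 1 + 𝒜.degsum w
  ainfty : ∀ w : List 𝒜.E, w ≠ [] → 𝒜.Composable w →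
    (∑ pl ∈ (Finset.range (w.length + 1) ×ˢ Finset.range (w.length + 1)).filter
        (fun pl => 1 ≤ pl.2 ∧ pl.1 + pl.2 ≤ w.length),
      psign (𝒜.degsum (w.take pl.1)) •
        ((𝒜.m ((w.drop pl.1).take pl.2)).sum fun r c =>
          c • 𝒜.m (w.take pl.1 ++ r :: w.drop (pl.1 + pl.2)))) = 0

/-- Extension of a map on basis words to a linear endomorphism of the free
module on words. -/
noncomputable def extOp (f : List 𝒜.E → (List 𝒜.E →₀ k)) :
    Module.End k (List 𝒜.E →₀ k) :=
  Finsupp.lsum k fun w => LinearMap.toSpanSingleton k (List 𝒜.E →₀ k) (f w)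

/-- The signed cyclic operator `T` (equal to `tₙ` on words of length `n+1`):
`t(āₙ₊₁,…,ā₁) = (−1)^{|ā₁|(|āₙ₊₁|+⋯+|ā₂|)} (ā₁,āₙ₊₁,…,ā₂)`. -/
noncomputable def tOp : Module.End k (List 𝒜.E →₀ k) :=
  𝒜.extOp fun w =>
    match w with
    | [] => 0
    | a :: rest =>
        psign (𝒜.deg a * 𝒜.degsum rest) • Finsupp.single (rest ++ [a]) (1 : k)

/-- The norm operator `N` (equal to `Nₙ = 1 + tₙ + ⋯ + tₙⁿ` on words of
length `n+1`). -/
noncomputable def nOp : Module.End k (List 𝒜.E →₀ k) :=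
  𝒜.extOp fun w => (∑ i ∈ Finset.range w.length, 𝒜.tOp ^ i) (Finsupp.single w (1 : k))

/-- The internal Hochschild differential `b'`: contraction of a non-wrapping
block of length `l ≥ 1` starting at position `p`, with sign
`(−1)^{|ā₁|+⋯+|ā_p|}`.  (On the reduced bar construction this is exactly the bar
codifferential `m̄`.) -/
noncomputable def bpOp : Module.End k (List 𝒜.E →₀ k) :=
  𝒜.extOp fun w =>
    ∑ pl ∈ (Finset.range (w.length + 1) ×ˢ Finset.range (w.length + 1)).filter
        (fun pl => 1 ≤ pl.2 ∧ pl.1 + pl.2 ≤ w.length),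
      psign (𝒜.degsum (w.take pl.1)) •
        ((𝒜.m ((w.drop pl.1).take pl.2)).sum fun r c =>
          c • Finsupp.single (w.take pl.1 ++ r :: w.drop (pl.1 + pl.2)) (1 : k))

/-- The wrap-around part `b''` of the Hochschild differential:
`b''(āₙ₊₁,…,ā₁) = ∑ (−1)^{ν_{ij}} (m̄(āᵢ,…,ā₁,āₙ₊₁,…,ā_{n−j+1}), ā_{n−j},…,ā_{i+1})`,
where the block takes `s = j+1` letters from the end and `i` letters from the
beginning, and
`ν_{ij} = (|ā₁|+⋯+|āᵢ|)(|ā_{i+1}|+⋯+|āₙ₊₁|) + (|ā_{n−j}|+⋯+|ā_{i+1}|)`. -/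
noncomputable def bppOp : Module.End k (List 𝒜.E →₀ k) :=
  𝒜.extOp fun w =>
    ∑ si ∈ (Finset.range (w.length + 1) ×ˢ Finset.range (w.length + 1)).filter
        (fun si => 1 ≤ si.1 ∧ 1 ≤ si.2 ∧ si.1 + si.2 ≤ w.length),
      psign (𝒜.degsum (w.take si.2) * 𝒜.degsum (w.drop si.2)
          + 𝒜.degsum ((w.drop si.2).take (w.length - si.1 - si.2))) •
        ((𝒜.m (w.drop (w.length - si.1) ++ w.take si.2)).sum fun r c =>
          c • Finsupp.single (((w.drop si.2).take (w.length - si.1 - si.2)) ++ [r]) (1 : k))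

/-- The full Hochschild differential `b = b' + b''`. -/
noncomputable def bOp : Module.End k (List 𝒜.E →₀ k) := 𝒜.bpOp + 𝒜.bppOp

/-- The weight-`(n+1)` component of the Hochschild chain space `CH_•(𝒜)`. -/
noncomputable def CHn (n : ℕ) : Submodule k (List 𝒜.E →₀ k) :=
  Submodule.span k
    {x | ∃ w : List 𝒜.E, w.length = n + 1 ∧ 𝒜.Cyclic w ∧ x = Finsupp.single w (1 : k)}

/-- The Hochschild chain space `CH_•(𝒜)` (reduced, i.e. its positive-weight part),
spanned by the cyclically composable nonempty words. -/
noncomputable def CHall : Submodule k (List 𝒜.E →₀ k) :=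
  Submodule.span k {x | ∃ w : List 𝒜.E, 𝒜.Cyclic w ∧ x = Finsupp.single w (1 : k)}

/-- The reduced bar construction `B̃(𝒜)`, spanned by the composable nonempty
words. -/
noncomputable def Bsub : Submodule k (List 𝒜.E →₀ k) :=
  Submodule.span k
    {x | ∃ w : List 𝒜.E, w ≠ [] ∧ 𝒜.Composable w ∧ x = Finsupp.single w (1 : k)}

end AInftyCat

end AIC

namespace AIC
namespace AInftyCat

variable {k : Type} [Field k] (𝒜 : AInftyCat k)

/-- The dual `B̃(𝒜)^∨` of the reduced bar construction: functionals on words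
vanishing outside the nonempty composable words. -/
def DualSp : Submodule k (List 𝒜.E → k) where
  carrier := {f | ∀ w : List 𝒜.E, (w = [] ∨ ¬𝒜.Composable w) → f w = 0}
  add_mem' := by
    intro f g hf hg w hw
    simp [hf w hw, hg w hw]
  zero_mem' := by intro w _; rfl
  smul_mem' := by
    intro c f hf w hw
    simp [hf w hw]

/-- A functional is homogeneous of degree `r` if it is supported on words of
total (shifted) degree `r`. -/
def IsDeg (f : List 𝒜.E → k) (r : ℤ) : Prop := ∀ w, f w ≠ 0 → 𝒜.degsum w = r

/-- The convolution product on `B̃(𝒜)^∨`, dual to the deconcatenation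
coproduct: `(f · g)(āₙ,…,ā₁) = ∑_{i=1}^{n−1} f(āₙ,…,ā_{i+1}) g(āᵢ,…,ā₁)`. -/
def conv (f g : List 𝒜.E → k) : List 𝒜.E → k :=
  fun w => ∑ i ∈ Finset.Ioo 0 w.length, f (w.drop i) * g (w.take i)

/-- All objects occurring in a word lie in `S`. -/
def objsIn (w : List 𝒜.E) (S : Set 𝒜.Ob) : Prop :=
  ∀ a ∈ w, 𝒜.src a ∈ S ∧ 𝒜.tgt a ∈ S

/-- Graded commutators `f·g − (−1)^{|f||g|} g·f` of homogeneous elements of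
`B̃(𝒜)^∨`. -/
def CommSet : Set (List 𝒜.E → k) :=
  {x | ∃ (f g : List 𝒜.E → k) (r s : ℤ), f ∈ 𝒜.DualSp ∧ g ∈ 𝒜.DualSp ∧
    𝒜.IsDeg f r ∧ 𝒜.IsDeg g s ∧
    x = 𝒜.conv f g - psign (r * s) • 𝒜.conv g f}

/-- The closure, in the adic topology (indexed by the weight and by finite sets
of objects), of the span of the graded commutators in `B̃(𝒜)^∨`. -/
def CommClosure : Submodule k (List 𝒜.E → k) where
  carrier := {g | ∀ (N : ℕ) (S : Set 𝒜.Ob), S.Finite →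
    ∃ h ∈ Submodule.span k 𝒜.CommSet,
      ∀ w : List 𝒜.E, w.length ≤ N → 𝒜.objsIn w S → g w = h w}
  add_mem' := by
    intro f g hf hg N S hS
    obtain ⟨a, ha, hfa⟩ := hf N S hS
    obtain ⟨b, hb, hgb⟩ := hg N S hS
    exact ⟨a + b, Submodule.add_mem _ ha hb, fun w h1 h2 => by
      simp [hfa w h1 h2, hgb w h1 h2]⟩
  zero_mem' := by
    intro N S hS
    exact ⟨0, Submodule.zero_mem _, fun w _ _ => rfl⟩
  smul_mem' := by
    intro c f hf N S hS
    obtain ⟨a, ha, hfa⟩ := hf N S hS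
    exact ⟨c • a, Submodule.smul_mem _ _ ha, fun w h1 h2 => by simp [hfa w h1 h2]⟩

/-- The cyclic cochain complex `CC^•(𝒜)`: functionals on the Hochschild chain
space (supported on cyclic words) which are invariant under the signed cyclic
operator `T`. -/
def CCsub : Submodule k (List 𝒜.E → k) where
  carrier := {f | (∀ w : List 𝒜.E, ¬𝒜.Cyclic w → f w = 0) ∧
    ∀ (a : 𝒜.E) (rest : List 𝒜.E), 𝒜.Cyclic (a :: rest) →
      f (a :: rest) = ((psign (𝒜.deg a * 𝒜.degsum rest) : ℤ) : k) * f (rest ++ [a])}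
  add_mem' := by
    rintro f g ⟨hf1, hf2⟩ ⟨hg1, hg2⟩
    refine ⟨fun w hw => ?_, fun a rest h => ?_⟩
    · simp [hf1 w hw, hg1 w hw]
    · simp only [Pi.add_apply, hf2 a rest h, hg2 a rest h]; ring
  zero_mem' := ⟨fun w _ => rfl, fun a rest _ => by simp⟩
  smul_mem' := by
    rintro c f ⟨hf1, hf2⟩
    refine ⟨fun w hw => ?_, fun a rest h => ?_⟩
    · simp [hf1 w hw]
    · simp only [Pi.smul_apply, smul_eq_mul, hf2 a rest h]; ring

/-- The dual `b^*` of the full Hochschild differential `b`, acting on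
functionals. -/
noncomputable def dualB (f : List 𝒜.E → k) : List 𝒜.E → k :=
  fun w => (𝒜.bOp (Finsupp.single w (1 : k))).sum fun v c => c * f v

/-- The dual `m̄^∨` of the bar codifferential `m̄` (i.e. of `b'`), the
differential of the DG algebra `B̃(𝒜)^∨`. -/
noncomputable def dualDm (f : List 𝒜.E → k) : List 𝒜.E → k :=
  fun w => (𝒜.bpOp (Finsupp.single w (1 : k))).sum fun v c => c * f v

/-- Cocycles of the cyclic cochain complex `(CC^•(𝒜), b^*)`. -/
def IsCocycleC (f : List 𝒜.E → k) : Prop :=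
  f ∈ 𝒜.CCsub ∧ ∀ w : List 𝒜.E, 𝒜.Cyclic w → 𝒜.dualB f w = 0

/-- Two cyclic cochains are cohomologous in `(CC^•(𝒜), b^*)`. -/
def CohomC (f g : List 𝒜.E → k) : Prop :=
  f ∈ 𝒜.CCsub ∧ g ∈ 𝒜.CCsub ∧
    ∃ h ∈ 𝒜.CCsub, ∀ w : List 𝒜.E, 𝒜.Cyclic w → f w - g w = 𝒜.dualB h w

end AInftyCat
end AIC

namespace AIC

open scoped Classical

variable {k : Type} [Field k]

/-- Assumption (★) for a based A∞ category `𝒜`, with parameter `d`: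

(1) all morphism spaces are finite dimensional (`arrows a b` is the finite set
of basis arrows from `a` to `b`), and there is an isomorphism
`Hom^i(A,B) ≅ Hom^{d−i}(B,A)`, `p ↦ p*`, carrying basis to basis (the
involution `star`; recall degrees are shifted down by one, whence
`|p̄| + |p̄*| = d − 2`);

(2) the structure constants `ε(q*, pₙ, …, p₁)` of `m̄ₙ` are cyclically
invariant;

together with the fixed sign convention `sgn(p, p*)` of the paper:
`sg p = sgn(p,p*)` equals `(−1)^{|p|}` or the Koszul-transported sign for one
chosen orientation of each pair `{p, p*}`, and vanishes when `p = p*` has even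
degree. -/
structure StarData (𝒜 : AInftyCat k) (d : ℤ) where
  star : 𝒜.E → 𝒜.E
  arrows : 𝒜.Ob → 𝒜.Ob → Finset 𝒜.E
  sg : 𝒜.E → ℤ
  mem_arrows : ∀ (a b : 𝒜.Ob) (p : 𝒜.E), p ∈ arrows a b ↔ 𝒜.src p = a ∧ 𝒜.tgt p = b
  star_star : ∀ p, star (star p) = p
  src_star : ∀ p, 𝒜.src (star p) = 𝒜.tgt p
  tgt_star : ∀ p, 𝒜.tgt (star p) = 𝒜.src p
  deg_star : ∀ p, 𝒜.deg p + 𝒜.deg (star p) = d - 2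
  sg_self : ∀ p, star p = p → Even (𝒜.deg p) → sg p = 0
  sg_pair : ∀ p, star p ≠ p ∨ Odd (𝒜.deg p) →
    (sg p = psign (𝒜.deg p) ∧
      sg (star p) = psign (𝒜.deg (star p) + (𝒜.deg (star p) + 1) * (𝒜.deg p + 1)))
    ∨ (sg (star p) = psign (𝒜.deg (star p)) ∧
      sg p = psign (𝒜.deg p + (𝒜.deg p + 1) * (𝒜.deg (star p) + 1)))
  cyclic : ∀ (w : List 𝒜.E) (hw : w ≠ []), 𝒜.Composable w → ∀ q : 𝒜.E,
    𝒜.src q = 𝒜.src (w.head hw) → 𝒜.tgt q = 𝒜.tgt (w.getLast hw) →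
    𝒜.m w q = ((psign (𝒜.deg (star q) * 𝒜.degsum w) : ℤ) : k) *
      𝒜.m (star q :: w.dropLast) (star (w.getLast hw))

namespace AInftyCat

variable (𝒜 : AInftyCat k)

/-- The object `A_{i+1}` sitting between the `i`-th and `(i+1)`-st letters of a
word (`= tgt` of the last letter when `i` is the length of the word). -/
def nodeAt (u : List 𝒜.E) (hu : u ≠ []) (i : ℕ) : 𝒜.Ob :=
  if h : i < u.length then 𝒜.src (u.get ⟨i, h⟩) else 𝒜.tgt (u.getLast hu)

/-- A functional on pairs of words (an element of the completed tensor square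
of `B̃(𝒜)^∨`) is homogeneous of degree `r` if it is supported on pairs of total
degree `r`. -/
def IsDeg2 (F : List 𝒜.E → List 𝒜.E → k) (r : ℤ) : Prop :=
  ∀ u v, F u v ≠ 0 → 𝒜.degsum u + 𝒜.degsum v = r

/-- Left multiplication `g · (u ⊗ v) = (g·u) ⊗ v` on the (completed) tensor
square of `B̃(𝒜)^∨`, in terms of functionals on pairs of words. -/
def lmulF (g : List 𝒜.E → k) (F : List 𝒜.E → List 𝒜.E → k) :
    List 𝒜.E → List 𝒜.E → k :=
  fun x y => ∑ i ∈ Finset.Ioo 0 x.length, g (x.drop i) * F (x.take i) y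

/-- Right multiplication `(u ⊗ v) · h = u ⊗ (v·h)` on the (completed) tensor
square of `B̃(𝒜)^∨`, in terms of functionals on pairs of words. -/
def rmulF (F : List 𝒜.E → List 𝒜.E → k) (h : List 𝒜.E → k) :
    List 𝒜.E → List 𝒜.E → k :=
  fun x y => ∑ i ∈ Finset.Ioo 0 y.length, F x (y.drop i) * h (y.take i)

end AInftyCat

namespace StarData

variable {𝒜 : AInftyCat k} {d : ℤ}

/-- The double bracket on `B̃(𝒜)^∨` (formula (7) of the paper):
`{{f,g}}((a_m,…,a₁),(b_n,…,b₁)) = ∑_{i,j,p} (−1)^{ε_{ij}} sgn(p,p*)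
 f(b_n,…,b_j,p,a_{i−1},…,a₁) · g(a_m,…,a_i,p*,b_{j−1},…,b₁)`,
where `p` runs over the basis of `H̄om(A_i,B_j)` and
`ε_{ij} = (|a_m|+⋯+|a_i|+|b_n|+⋯+|b_j|+|p|)(|a_{i−1}|+⋯+|a₁|)
      + (|a_m|+⋯+|a_i|)(|b_n|+⋯+|b_j|+|p*|)`.
The result is viewed as an element of the completed tensor square of
`B̃(𝒜)^∨`, i.e. as a functional on pairs of words; it is extended by zero when
one of the arguments is the empty word. -/
noncomputable def dbr (S : StarData 𝒜 d) (f g : List 𝒜.E → k) :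
    List 𝒜.E → List 𝒜.E → k := fun u v =>
  if h : u ≠ [] ∧ v ≠ [] then
    ∑ i0 ∈ Finset.range (u.length + 1), ∑ j0 ∈ Finset.range (v.length + 1),
      ∑ p ∈ S.arrows (𝒜.nodeAt u h.1 i0) (𝒜.nodeAt v h.2 j0),
        ((psign ((𝒜.degsum (u.drop i0) + 𝒜.degsum (v.drop j0) + 𝒜.deg p)
              * 𝒜.degsum (u.take i0)
            + 𝒜.degsum (u.drop i0) * (𝒜.degsum (v.drop j0) + 𝒜.deg (S.star p)))
          * S.sg p : ℤ) : k)
          * f (u.take i0 ++ p :: v.drop j0) * g (v.take j0 ++ S.star p :: u.drop i0)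
  else 0

/-- `{{f, G}}_L`: the double bracket applied to the first tensor factor of a
functional `G` on pairs of words, producing a functional on triples of words;
`{{a, b₁ ⊗ b₂}}_L = {{a, b₁}} ⊗ b₂`. -/
noncomputable def dbrL (S : StarData 𝒜 d) (f : List 𝒜.E → k)
    (G : List 𝒜.E → List 𝒜.E → k) : List 𝒜.E → List 𝒜.E → List 𝒜.E → k :=
  fun x y z =>
    if h : x ≠ [] ∧ y ≠ [] then
      ∑ i0 ∈ Finset.range (x.length + 1), ∑ j0 ∈ Finset.range (y.length + 1),
        ∑ p ∈ S.arrows (𝒜.nodeAt x h.1 i0) (𝒜.nodeAt y h.2 j0),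
          ((psign ((𝒜.degsum (x.drop i0) + 𝒜.degsum (y.drop j0) + 𝒜.deg p)
                * 𝒜.degsum (x.take i0)
              + 𝒜.degsum (x.drop i0) * (𝒜.degsum (y.drop j0) + 𝒜.deg (S.star p)))
            * S.sg p : ℤ) : k)
            * f (x.take i0 ++ p :: y.drop j0) * G (y.take j0 ++ S.star p :: x.drop i0) z
    else 0

/-- The induced bracket `{f,g} = μ ∘ {{f,g}}` on `B̃(𝒜)^∨` (`μ` being the
convolution product, dual to the deconcatenation coproduct). -/
noncomputable def sbr (S : StarData 𝒜 d) (f g : List 𝒜.E → k) : List 𝒜.E → k :=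
  fun w => ∑ i ∈ Finset.Ioo 0 w.length, S.dbr f g (w.drop i) (w.take i)

end StarData

end AIC

namespace AIC

section SignLemmas

lemma psign_mul_self (x : ℤ) : psign x * psign x = 1 := by
  unfold psign; split <;> norm_num

lemma psign_mul (x y : ℤ) : psign x * psign y = psign (x + y) := by
  unfold psign
  by_cases hx : Even x <;> by_cases hy : Even y <;>
    simp [hx, hy, Int.even_add]

lemma psign_eq_of_even_sub {x y : ℤ} (h : Even (x - y)) : psign x = psign y := by
  rw [Int.even_sub] at h
  unfold psign
  simp only [h]

lemma psign_add_one (x : ℤ) : psign (x + 1) = -psign x := by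
  unfold psign
  by_cases hx : Even x <;> simp [hx, Int.even_add_one]

lemma psign_solve (e1 e2 e3 e4 e5 sp : ℤ)
    (h : Even (e2 + e3 + (e4 + e5) - (e1 + 1))) :
    psign e1 * sp = -(psign e2 * psign e3 * (psign e4 * (psign e5 * sp))) := by
  have hK : psign e2 * psign e3 * (psign e4 * psign e5) = -psign e1 := by
    simp only [psign_mul]
    rw [psign_eq_of_even_sub h, psign_add_one]
  linear_combination sp * hK

lemma key_sign (d a b A A' B B' r s sp sq : ℤ)
    (hdeg : a + b = d - 2) (hr : A + (a + B') = r) (hs : B + (b + A') = s)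
    (h1 : sp * sp = 1)
    (h2 : sp * sq = psign (a + b + (a + 1) * (b + 1))) :
    psign ((A' + B' + a) * A + A' * (B' + b)) * sp
      = -(psign ((r + d) * (s + d)) * psign ((A + A') * (B + B'))
          * (psign ((B' + A' + b) * B + B' * (A' + a)) * sq)) := by
  have h3 : sq = psign (a + b + (a + 1) * (b + 1)) * sp := by
    linear_combination sp * h2 - sq * h1
  rw [h3]
  apply psign_solve
  subst hr hs
  have hb : b = d - 2 - a := by omega
  subst hb
  exact ⟨(-2) + (-1) * A + A * B + (-1) * A * a + A * d + A' + A' * B + A' * B' + A' * a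
      + (-1) * B + B * B' + B * d + (-1) * B' + B' * d + (-2) * a + (-1) * a * a
      + a * d + d * d, by ring⟩

variable {k : Type} [Field k]

lemma sg_cases {𝒜 : AInftyCat k} {d : ℤ} (S : StarData 𝒜 d) (p : 𝒜.E) :
    (S.sg p = 0 ∧ S.sg (S.star p) = 0) ∨
    (S.sg p * S.sg p = 1 ∧
      S.sg p * S.sg (S.star p)
        = psign (𝒜.deg p + 𝒜.deg (S.star p)
            + (𝒜.deg p + 1) * (𝒜.deg (S.star p) + 1))) := by
  by_cases hp : S.star p = p ∧ Even (𝒜.deg p)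
  · left
    have h0 := S.sg_self p hp.1 hp.2
    exact ⟨h0, by rw [hp.1]; exact h0⟩
  · right
    have hp' : S.star p ≠ p ∨ Odd (𝒜.deg p) := by
      rcases not_and_or.mp hp with h | h
      · exact Or.inl h
      · exact Or.inr (Int.not_even_iff_odd.mp h)
    rcases S.sg_pair p hp' with ⟨e1, e2⟩ | ⟨e1, e2⟩ <;> rw [e1, e2] <;>
        refine ⟨psign_mul_self _, ?_⟩ <;>
      · rw [psign_mul]
        exact psign_eq_of_even_sub ⟨0, by ring⟩

lemma degsum_append (𝒜 : AInftyCat k) (u v : List 𝒜.E) :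
    𝒜.degsum (u ++ v) = 𝒜.degsum u + 𝒜.degsum v := by
  simp [AInftyCat.degsum]

lemma degsum_cons (𝒜 : AInftyCat k) (a : 𝒜.E) (w : List 𝒜.E) :
    𝒜.degsum (a :: w) = 𝒜.deg a + 𝒜.degsum w := by
  simp [AInftyCat.degsum]

lemma degsum_take_drop (𝒜 : AInftyCat k) (w : List 𝒜.E) (i : ℕ) :
    𝒜.degsum (w.take i) + 𝒜.degsum (w.drop i) = 𝒜.degsum w := by
  rw [← degsum_append, List.take_append_drop]

end SignLemmas

/-- Under Assumption (★) with parameter `d`, the double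
bracket `{{−,−}}` on `B̃(𝒜)^∨` has degree `2 − d` and is graded
skew-symmetric: `{{f,g}} = −(−1)^{(|f|+d)(|g|+d)} {{g,f}}°`, where
`(u ⊗ v)° = (−1)^{|u||v|} v ⊗ u` (expressed on functionals on pairs of
words). -/
theorem double_bracket_degree_and_skew {k : Type} [Field k] [CharZero k]
    {𝒜 : AInftyCat k} (h𝒜 : 𝒜.IsAInfty) {d : ℤ} (hd : 0 < d) (S : StarData 𝒜 d) :
    (∀ (f g : List 𝒜.E → k) (r s : ℤ), f ∈ 𝒜.DualSp → g ∈ 𝒜.DualSp →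
      𝒜.IsDeg f r → 𝒜.IsDeg g s → 𝒜.IsDeg2 (S.dbr f g) (r + s + (2 - d))) ∧
    (∀ (f g : List 𝒜.E → k) (r s : ℤ), f ∈ 𝒜.DualSp → g ∈ 𝒜.DualSp →
      𝒜.IsDeg f r → 𝒜.IsDeg g s → ∀ u v : List 𝒜.E,
        S.dbr f g u v
          = -(((psign ((r + d) * (s + d)) * psign (𝒜.degsum u * 𝒜.degsum v) : ℤ) : k)
              * S.dbr g f v u)) := by
  constructor
  · -- degree part
    intro f g r s hf hg hfr hgs u v hne
    unfold StarData.dbr at hne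
    by_cases h : u ≠ [] ∧ v ≠ []
    · rw [dif_pos h] at hne
      obtain ⟨i0, -, hne⟩ := Finset.exists_ne_zero_of_sum_ne_zero hne
      obtain ⟨j0, -, hne⟩ := Finset.exists_ne_zero_of_sum_ne_zero hne
      obtain ⟨p, -, hne⟩ := Finset.exists_ne_zero_of_sum_ne_zero hne
      have hF : f (u.take i0 ++ p :: v.drop j0) ≠ 0 := by
        intro h0; exact hne (by rw [h0]; ring)
      have hG : g (v.take j0 ++ S.star p :: u.drop i0) ≠ 0 := by
        intro h0; exact hne (by rw [h0]; ring)
      have h1 := hfr _ hF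
      have h2 := hgs _ hG
      rw [degsum_append, degsum_cons] at h1 h2
      have h3 := degsum_take_drop 𝒜 u i0
      have h4 := degsum_take_drop 𝒜 v j0
      have h5 := S.deg_star p
      linarith
    · rw [dif_neg h] at hne
      exact absurd rfl hne
  · -- skew-symmetry part
    intro f g r s hf hg hfr hgs u v
    unfold StarData.dbr
    by_cases h : u ≠ [] ∧ v ≠ []
    · have h' : v ≠ [] ∧ u ≠ [] := ⟨h.2, h.1⟩
      rw [dif_pos h, dif_pos h']
      conv_rhs => rw [Finset.sum_comm]
      simp only [Finset.mul_sum]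
      simp only [← Finset.sum_neg_distrib]
      refine Finset.sum_congr rfl fun i0 _ => Finset.sum_congr rfl fun j0 _ => ?_
      refine Finset.sum_nbij' S.star S.star ?_ ?_ ?_ ?_ ?_
      · intro p hp
        rw [S.mem_arrows] at hp ⊢
        exact ⟨by rw [S.src_star, hp.2], by rw [S.tgt_star, hp.1]⟩
      · intro p hp
        rw [S.mem_arrows] at hp ⊢
        exact ⟨by rw [S.src_star, hp.2], by rw [S.tgt_star, hp.1]⟩
      · intro p _; exact S.star_star p
      · intro p _; exact S.star_star p
      · intro p _
        rw [S.star_star]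
        rcases sg_cases S p with ⟨hz1, hz2⟩ | ⟨h1, h2⟩
        · rw [hz1, hz2]; push_cast; ring
        · by_cases hF : f (u.take i0 ++ p :: v.drop j0) = 0
          · rw [hF]; ring
          by_cases hG : g (v.take j0 ++ S.star p :: u.drop i0) = 0
          · rw [hG]; ring
          have hd1 := hfr _ hF
          have hd2 := hgs _ hG
          rw [degsum_append, degsum_cons] at hd1 hd2
          rw [← degsum_take_drop 𝒜 u i0, ← degsum_take_drop 𝒜 v j0]
          have hz := key_sign d (𝒜.deg p) (𝒜.deg (S.star p))
            (𝒜.degsum (u.take i0)) (𝒜.degsum (u.drop i0))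
            (𝒜.degsum (v.take j0)) (𝒜.degsum (v.drop j0)) r s
            (S.sg p) (S.sg (S.star p)) (S.deg_star p) hd1 hd2 h1 h2
          have hzc := congrArg (fun z : ℤ => (z : k)) hz
          push_cast at hzc
          push_cast
          linear_combination f (u.take i0 ++ p :: v.drop j0)
            * g (v.take j0 ++ S.star p :: u.drop i0) * hzc
    · have h' : ¬(v ≠ [] ∧ u ≠ []) := fun hh => h ⟨hh.2, hh.1⟩
      rw [dif_neg h, dif_neg h']
      ring

end AIC
end

section
/- Let 𝒜 be an A∞ category over a field k of characteristic zero satisfying Assumption (★) with parameter d, and let {{−,−}} be the bracket on B̃(𝒜)^∨ defined by {{f,g}}((a_m,…,a₁),(b_n,…,b₁)) = Σ_{i,j} Σ_p (−1)^{ε_{ij}} sgn(p,p*) f(b_n,…,b_j,p,a_{i−1},…,a₁) g(a_m,…,a_i,p*,b_{j−1},…,b₁). Then {{−,−}} satisfies the graded double Jacobi identity in the completed triple tensor product: {{f,{{g,h}}}}_L + (−1)^{(|f|+d)(|g|+|h|)} σ_{(123)}{{g,{{h,f}}}}_L + (−1)^{(|h|+d)(|f|+|g|)} σ_{(132)}{{h,{{f,g}}}}_L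 = 0. -/
/-!
Formalization framework: a "based" A∞ category over a field `k` of characteristic
zero.  Morphism spaces `H̄om(A,B)` (gradings already shifted down by one) are given
by a homogeneous basis: `E` is the set of all basis elements ("arrows"), with
source, target and (shifted) degree.  The shifted A∞ operations `m̄ₙ` are recorded
through their structure constants: for a composable word `w = [a₁,…,aₙ]`
(written right-to-left, i.e. `a₁` is the first morphism to be composed),
`m w : E →₀ k` is `m̄ₙ(āₙ,…,ā₁)` expanded in the basis.

The Hochschild chain space `CH_•(𝒜)` is the span, inside the free module
`List E →₀ k`, of the cyclically composable nonempty words; the reduced bar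
construction `B̃(𝒜)` is the span of the composable nonempty words.
-/

set_option maxSynthPendingDepth 3

open Finsupp TensorProduct

namespace AIC


section JacobiProof

open Finset

variable {k : Type} [Field k]

/-! ### Sign arithmetic -/

lemma psign_mul_psign (a b : ℤ) : psign a * psign b = psign (a + b) := by
  unfold psign
  by_cases ha : Even a <;> by_cases hb : Even b <;>
    simp [ha, hb, Int.even_add, *]

lemma psign_even {a : ℤ} (h : Even a) : psign a = 1 := if_pos h

lemma psign_add_psign {a b : ℤ} (h : Odd (a + b)) : psign a + psign b = 0 := by
  rw [← Int.not_even_iff_odd, Int.even_add] at h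
  unfold psign
  by_cases ha : Even a <;> by_cases hb : Even b <;> simp [ha, hb] at h ⊢ <;> tauto

/-- The omnibus sign-cancellation shape. -/
lemma psign_sum_shape (a1 a2 a3 b1 b2 b3 b4 sq : ℤ)
    (h : Odd (a1 + a2 + a3 + (b1 + b2 + b3 + b4))) :
    psign a1 * psign a2 * (psign a3 * sq)
      + psign b1 * (psign b2 * sq * (psign b3 * psign b4)) = 0 := by
  have H1 : psign a1 * psign a2 * (psign a3 * sq) = psign (a1 + a2 + a3) * sq := by
    rw [← psign_mul_psign, ← psign_mul_psign]; ring
  have H2 : psign b1 * (psign b2 * sq * (psign b3 * psign b4))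
      = psign (b1 + b2 + b3 + b4) * sq := by
    rw [← psign_mul_psign, ← psign_mul_psign, ← psign_mul_psign]; ring
  rw [H1, H2, ← add_mul, psign_add_psign (by rwa [show a1 + a2 + a3 + (b1 + b2 + b3 + b4)
    = (a1 + a2 + a3) + (b1 + b2 + b3 + b4) from by ring] at h), zero_mul]

namespace AInftyCat

variable (𝒜 : AInftyCat k)

lemma degsum_append (l1 l2 : List 𝒜.E) :
    𝒜.degsum (l1 ++ l2) = 𝒜.degsum l1 + 𝒜.degsum l2 := by
  simp [AInftyCat.degsum]

lemma degsum_cons (a : 𝒜.E) (l : List 𝒜.E) :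
    𝒜.degsum (a :: l) = 𝒜.deg a + 𝒜.degsum l := by
  simp [AInftyCat.degsum]

/-- Splitting a degsum at two nested positions. -/
lemma degsum_drop_split (w : List 𝒜.E) {i1 j0 : ℕ} (h : i1 ≤ j0) :
    𝒜.degsum (w.drop i1)
      = 𝒜.degsum ((w.drop i1).take (j0 - i1)) + 𝒜.degsum (w.drop j0) := by
  conv_lhs => rw [← List.take_append_drop (j0 - i1) (w.drop i1)]
  rw [degsum_append, List.drop_drop, Nat.add_sub_cancel' h]

lemma degsum_take_drop (w : List 𝒜.E) (i : ℕ) :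
    𝒜.degsum w = 𝒜.degsum (w.take i) + 𝒜.degsum (w.drop i) := by
  conv_lhs => rw [← List.take_append_drop i w, degsum_append]

/-- The node seen from inside a word of the form `y.take j0 ++ c :: l` at a
position `i1 ≤ j0` agrees with the node of `y`. -/
lemma nodeAt_prefix (y : List 𝒜.E) (hy : y ≠ []) (c : 𝒜.E) (l : List 𝒜.E)
    {j0 i1 : ℕ} (hj0 : j0 ≤ y.length) (hi1 : i1 ≤ j0)
    (hc : 𝒜.src c = 𝒜.nodeAt y hy j0) (hne : y.take j0 ++ c :: l ≠ []) :
    𝒜.nodeAt (y.take j0 ++ c :: l) hne i1 = 𝒜.nodeAt y hy i1 := by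
  have hlt : j0 ≤ (y.take j0).length := by
    rw [List.length_take]; omega
  have hlen : i1 < (y.take j0 ++ c :: l).length := by
    rw [List.length_append, List.length_take, List.length_cons]; omega
  rcases lt_or_eq_of_le hi1 with hlt1 | rfl
  · -- i1 < j0
    have h1 : i1 < y.length := lt_of_lt_of_le hlt1 hj0
    have h2 : i1 < (y.take j0).length := by rw [List.length_take]; omega
    unfold nodeAt
    rw [dif_pos hlen, dif_pos h1]
    congr 1
    show (y.take j0 ++ c :: l)[i1] = y[i1]
    rw [List.getElem_append_left h2, List.getElem_take]
  · -- i1 = j0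
    unfold nodeAt
    rw [dif_pos hlen]
    have h2 : (y.take i1).length ≤ i1 := by rw [List.length_take]; omega
    have : (y.take i1 ++ c :: l)[i1]'hlen = c := by
      rw [List.getElem_append_right h2]
      simp [List.length_take, Nat.min_eq_left hj0]
    rw [show (y.take i1 ++ c :: l).get ⟨i1, hlen⟩ = (y.take i1 ++ c :: l)[i1]'hlen
      from rfl, this]
    exact hc

/-- The node seen from inside a word of the form `l ++ c :: x.drop i0` at a
position `l.length + 1 + e` agrees with the node of `x` at `i0 + e`. -/
lemma nodeAt_suffix (x : List 𝒜.E) (hx : x ≠ []) (c : 𝒜.E) (l : List 𝒜.E)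
    {i0 e : ℕ} (hi0 : i0 ≤ x.length) (he : i0 + e ≤ x.length)
    (hc : 𝒜.tgt c = 𝒜.nodeAt x hx i0) (hne : l ++ c :: x.drop i0 ≠ []) :
    𝒜.nodeAt (l ++ c :: x.drop i0) hne (l.length + 1 + e) = 𝒜.nodeAt x hx (i0 + e) := by
  have hlenu : (l ++ c :: x.drop i0).length = l.length + 1 + (x.length - i0) := by
    rw [List.length_append, List.length_cons, List.length_drop]; omega
  by_cases hcase : i0 + e < x.length
  · have h1 : l.length + 1 + e < (l ++ c :: x.drop i0).length := by omega
    unfold nodeAt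
    rw [dif_pos h1, dif_pos hcase]
    congr 1
    show (l ++ c :: x.drop i0)[l.length + 1 + e] = x[i0 + e]
    rw [List.getElem_append_right (by omega)]
    have : l.length + 1 + e - l.length = e + 1 := by omega
    simp_rw [this]
    show (x.drop i0)[e]'(by rw [List.length_drop]; omega) = x[i0 + e]
    rw [List.getElem_drop]
  · -- i0 + e = x.length
    have heq : i0 + e = x.length := le_antisymm he (not_lt.mp hcase)
    have h1 : ¬ l.length + 1 + e < (l ++ c :: x.drop i0).length := by omega
    unfold nodeAt
    rw [dif_neg h1, dif_neg (by omega)]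
    rw [List.getLast_eq_getElem, List.getLast_eq_getElem]
    by_cases hi0x : i0 < x.length
    · have hd : 0 < (x.drop i0).length := by rw [List.length_drop]; omega
      congr 1
      rw [List.getElem_append_right (by omega)]
      have h3 : (l ++ c :: x.drop i0).length - 1 - l.length
          = (x.length - i0 - 1) + 1 := by omega
      simp_rw [h3]
      show (x.drop i0)[x.length - i0 - 1]'(by rw [List.length_drop]; omega)
        = x[x.length - 1]
      rw [List.getElem_drop]
      congr 1
      omega
    · -- i0 = x.length, e = 0
      have hi0' : i0 = x.length := by omega
      have hc' : 𝒜.tgt c = 𝒜.tgt (x[x.length - 1]'(by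
          have := List.length_pos_iff.2 hx; omega)) := by
        rw [hc]
        unfold nodeAt
        rw [dif_neg (by omega), List.getLast_eq_getElem]
      rw [← hc']
      congr 1
      have h5 : (l ++ c :: x.drop i0)[(l ++ c :: x.drop i0).length - 1]'(by omega) = c := by
        rw [List.getElem_append_right (by omega : l.length ≤ (l ++ c :: x.drop i0).length - 1)]
        have h6 : (l ++ c :: List.drop i0 x).length - 1 - l.length = 0 := by omega
        simp_rw [h6]
        rfl
      exact h5

end AInftyCat

namespace StarData

variable {𝒜 : AInftyCat k} {d : ℤ} (S : StarData 𝒜 d)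

lemma src_of_mem {a b : 𝒜.Ob} {p : 𝒜.E} (hp : p ∈ S.arrows a b) : 𝒜.src p = a :=
  ((S.mem_arrows a b p).1 hp).1

lemma tgt_of_mem {a b : 𝒜.Ob} {p : 𝒜.E} (hp : p ∈ S.arrows a b) : 𝒜.tgt p = b :=
  ((S.mem_arrows a b p).1 hp).2

lemma star_mem {a b : 𝒜.Ob} {p : 𝒜.E} (hp : p ∈ S.arrows a b) :
    S.star p ∈ S.arrows b a := by
  rw [S.mem_arrows, S.src_star, S.tgt_star, S.src_of_mem hp, S.tgt_of_mem hp]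
  exact ⟨rfl, rfl⟩

/-! ### The two halves of the iterated double bracket -/

/-- Summand of type A (the inner insertion point lies in the `y`-part). -/
noncomputable def tmA (f g h : List 𝒜.E → k) (x y z : List 𝒜.E)
    (i0 j0 i1 j1 : ℕ) (p q : 𝒜.E) : k :=
  ((psign ((𝒜.degsum (x.drop i0) + 𝒜.degsum (y.drop j0) + 𝒜.deg p)
        * 𝒜.degsum (x.take i0)
      + 𝒜.degsum (x.drop i0) * (𝒜.degsum (y.drop j0) + 𝒜.deg (S.star p)))
    * S.sg p : ℤ) : k)
  * f (x.take i0 ++ p :: y.drop j0) *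
  (((psign ((𝒜.degsum ((y.drop i1).take (j0 - i1) ++ S.star p :: x.drop i0)
        + 𝒜.degsum (z.drop j1) + 𝒜.deg q) * 𝒜.degsum (y.take i1)
      + 𝒜.degsum ((y.drop i1).take (j0 - i1) ++ S.star p :: x.drop i0)
        * (𝒜.degsum (z.drop j1) + 𝒜.deg (S.star q))) * S.sg q : ℤ) : k)
    * g (y.take i1 ++ q :: z.drop j1)
    * h (z.take j1 ++ S.star q :: ((y.drop i1).take (j0 - i1) ++ S.star p :: x.drop i0)))

/-- Summand of type B (the inner insertion point lies in the `x`-part). -/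
noncomputable def tmB (f g h : List 𝒜.E → k) (x y z : List 𝒜.E)
    (i0 j0 e j1 : ℕ) (p q : 𝒜.E) : k :=
  ((psign ((𝒜.degsum (x.drop i0) + 𝒜.degsum (y.drop j0) + 𝒜.deg p)
        * 𝒜.degsum (x.take i0)
      + 𝒜.degsum (x.drop i0) * (𝒜.degsum (y.drop j0) + 𝒜.deg (S.star p)))
    * S.sg p : ℤ) : k)
  * f (x.take i0 ++ p :: y.drop j0) *
  (((psign ((𝒜.degsum (x.drop (i0 + e)) + 𝒜.degsum (z.drop j1) + 𝒜.deg q)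
        * 𝒜.degsum (y.take j0 ++ S.star p :: (x.drop i0).take e)
      + 𝒜.degsum (x.drop (i0 + e)) * (𝒜.degsum (z.drop j1) + 𝒜.deg (S.star q)))
    * S.sg q : ℤ) : k)
    * g ((y.take j0 ++ S.star p :: (x.drop i0).take e) ++ q :: z.drop j1)
    * h (z.take j1 ++ S.star q :: x.drop (i0 + e)))

noncomputable def sumA (f g h : List 𝒜.E → k) (x y z : List 𝒜.E)
    (hx : x ≠ []) (hy : y ≠ []) (hz : z ≠ []) : k :=
  ∑ i0 ∈ range (x.length + 1), ∑ j0 ∈ range (y.length + 1),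
    ∑ p ∈ S.arrows (𝒜.nodeAt x hx i0) (𝒜.nodeAt y hy j0),
      ∑ i1 ∈ range (j0 + 1), ∑ j1 ∈ range (z.length + 1),
        ∑ q ∈ S.arrows (𝒜.nodeAt y hy i1) (𝒜.nodeAt z hz j1),
          S.tmA f g h x y z i0 j0 i1 j1 p q

noncomputable def sumB (f g h : List 𝒜.E → k) (x y z : List 𝒜.E)
    (hx : x ≠ []) (hy : y ≠ []) (hz : z ≠ []) : k :=
  ∑ i0 ∈ range (x.length + 1), ∑ j0 ∈ range (y.length + 1),
    ∑ p ∈ S.arrows (𝒜.nodeAt x hx i0) (𝒜.nodeAt y hy j0),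
      ∑ e ∈ range (x.length - i0 + 1), ∑ j1 ∈ range (z.length + 1),
        ∑ q ∈ S.arrows (𝒜.nodeAt x hx (i0 + e)) (𝒜.nodeAt z hz j1),
          S.tmB f g h x y z i0 j0 e j1 p q

lemma dbrL_split (f g h : List 𝒜.E → k) (x y z : List 𝒜.E)
    (hx : x ≠ []) (hy : y ≠ []) (hz : z ≠ []) :
    S.dbrL f (S.dbr g h) x y z
      = S.sumA f g h x y z hx hy hz + S.sumB f g h x y z hx hy hz := by
  unfold dbrL sumA sumB
  rw [dif_pos (⟨hx, hy⟩ : x ≠ [] ∧ y ≠ [])]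
  rw [← Finset.sum_add_distrib]
  refine Finset.sum_congr rfl fun i0 hi0 => ?_
  rw [← Finset.sum_add_distrib]
  refine Finset.sum_congr rfl fun j0 hj0 => ?_
  rw [← Finset.sum_add_distrib]
  refine Finset.sum_congr rfl fun p hp => ?_
  rw [Finset.mem_range] at hi0 hj0
  have hi0' : i0 ≤ x.length := by omega
  have hj0' : j0 ≤ y.length := by omega
  have hsrcp : 𝒜.src p = 𝒜.nodeAt x hx i0 := S.src_of_mem hp
  have htgtp : 𝒜.tgt p = 𝒜.nodeAt y hy j0 := S.tgt_of_mem hp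
  have hltk : (y.take j0).length = j0 := by rw [List.length_take]; omega
  set u : List 𝒜.E := y.take j0 ++ S.star p :: x.drop i0 with hu
  have hune : u ≠ [] := by simp [hu]
  unfold StarData.dbr
  rw [dif_pos (⟨hune, hz⟩ : u ≠ [] ∧ z ≠ [])]
  have hulen : u.length + 1 = (j0 + 1) + (x.length - i0 + 1) := by
    rw [hu, List.length_append, List.length_cons, List.length_drop, hltk]
    omega
  rw [hulen, Finset.sum_range_add, mul_add]
  congr 1
  · -- A part
    rw [Finset.mul_sum]
    refine Finset.sum_congr rfl fun i1 hi1 => ?_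
    rw [Finset.mem_range] at hi1
    have hi1' : i1 ≤ j0 := by omega
    have htk : u.take i1 = y.take i1 := by
      rw [hu, List.take_append_of_le_length (by omega : i1 ≤ (y.take j0).length),
        List.take_take, Nat.min_eq_left hi1']
    have hdr : u.drop i1 = (y.drop i1).take (j0 - i1) ++ S.star p :: x.drop i0 := by
      rw [hu, List.drop_append_of_le_length (by omega : i1 ≤ (y.take j0).length),
        List.drop_take]
    have hnd : 𝒜.nodeAt u hune i1 = 𝒜.nodeAt y hy i1 :=
      𝒜.nodeAt_prefix y hy (S.star p) (x.drop i0) hj0' hi1'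
        (by rw [S.src_star, htgtp]) hune
    rw [Finset.mul_sum]
    refine Finset.sum_congr rfl fun j1 hj1 => ?_
    rw [Finset.mul_sum]
    refine Finset.sum_congr (by rw [hnd]) fun q hq => ?_
    rw [htk, hdr, StarData.tmA]
  · -- B part
    rw [Finset.mul_sum]
    refine Finset.sum_congr rfl fun e he => ?_
    rw [Finset.mem_range] at he
    have he' : i0 + e ≤ x.length := by omega
    have hidx : j0 + 1 + e - (y.take j0).length = e + 1 := by omega
    have htk : u.take (j0 + 1 + e) = y.take j0 ++ S.star p :: (x.drop i0).take e := by
      rw [hu, List.take_append,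
        List.take_of_length_le (by omega : (y.take j0).length ≤ j0 + 1 + e),
        hidx, List.take_succ_cons]
    have hdr : u.drop (j0 + 1 + e) = x.drop (i0 + e) := by
      rw [hu, List.drop_append,
        List.drop_eq_nil_of_le (by omega : (y.take j0).length ≤ j0 + 1 + e),
        hidx, List.nil_append, List.drop_succ_cons, List.drop_drop]
    have hnd : 𝒜.nodeAt u hune (j0 + 1 + e) = 𝒜.nodeAt x hx (i0 + e) := by
      rw [show j0 + 1 + e = (y.take j0).length + 1 + e from by omega]
      exact 𝒜.nodeAt_suffix x hx (S.star p) (y.take j0) hi0' he'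
        (by rw [S.tgt_star, hsrcp]) hune
    rw [Finset.mul_sum]
    refine Finset.sum_congr rfl fun j1 hj1 => ?_
    rw [Finset.mul_sum]
    refine Finset.sum_congr (by rw [hnd]) fun q hq => ?_
    rw [htk, hdr, StarData.tmB]

lemma odd_shift {a b : ℤ} (h : Odd a) (hab : a = b) : Odd b := hab ▸ h

/-- The master parity identity behind the double Jacobi identity. -/
lemma parity_main (X1 X2 Y1 Y2 Y3 Z1 Z2 P Q D : ℤ) :
    Odd (((X2 + Y3 + P) * X1 + X2 * (Y3 + (D - 2 - P)))
      + P
      + ((Y2 + ((D - 2 - P) + X2) + Z2 + Q) * Y1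
          + (Y2 + ((D - 2 - P) + X2)) * (Z2 + (D - 2 - Q)))
      + ((((X1 + (P + Y3)) + D)
            * ((Y1 + (Q + Z2)) + (Z1 + ((D - 2 - Q) + (Y2 + ((D - 2 - P) + X2)))))
          + (X1 + X2) * ((Y1 + (Y2 + Y3)) + (Z1 + Z2)))
        + ((Y2 + Y3 + Z2 + Q) * Y1 + (Y2 + Y3) * (Z2 + (D - 2 - Q)))
        + ((Y3 + X2 + (D - 2 - P)) * (Z1 + ((D - 2 - Q) + Y2)) + Y3 * (X2 + P))
        + ((D - 2 - P) + ((D - 2 - P) + 1) * (P + 1)))) :=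
  ⟨(2) + (-5) * D + (2) * D * D + (2) * Q + (-1) * Q * D + (-1) * P + P * Q + (-1) * P * P + (-1) * Z2 + Z2 * D + (-1) * Z1 + Z1 * D + (-4) * Y3 + (2) * Y3 * D + (-1) * Y3 * Q + Y3 * Z2 + Y3 * Z1 + (-3) * Y2 + (2) * Y2 * D + (-1) * Y2 * Q + Y2 * Z2 + Y2 * Y3 + (-1) * Y1 + Y1 * D + Y1 * Q + Y1 * Z2 + Y1 * Y3 + Y1 * Y2 + (-3) * X2 + (2) * X2 * D + (-1) * X2 * Q + X2 * Z2 + X2 * Z1 + (2) * X2 * Y3 + X2 * Y2 + X2 * Y1 + (-2) * X1 + X1 * D + X1 * Z2 + X1 * Z1 + X1 * Y3 + X1 * Y2 + X1 * Y1 + X1 * X2, by ring⟩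

/-- The per-configuration sign identity. -/
lemma sign_key (p q : 𝒜.E) (X1 X2 Y1 Y2 Y3 Z1 Z2 r s t : ℤ)
    (hdr : X1 + (𝒜.deg p + Y3) = r) (hds : Y1 + (𝒜.deg q + Z2) = s)
    (hdt : Z1 + (𝒜.deg (S.star q) + (Y2 + (𝒜.deg (S.star p) + X2))) = t) :
    psign ((X2 + Y3 + 𝒜.deg p) * X1 + X2 * (Y3 + 𝒜.deg (S.star p))) * S.sg p
        * (psign ((Y2 + (𝒜.deg (S.star p) + X2) + Z2 + 𝒜.deg q) * Y1
            + (Y2 + (𝒜.deg (S.star p) + X2)) * (Z2 + 𝒜.deg (S.star q))) * S.sg q)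
      + psign ((r + d) * (s + t) + (X1 + X2) * (Y1 + (Y2 + Y3) + (Z1 + Z2)))
        * (psign ((Y2 + Y3 + Z2 + 𝒜.deg q) * Y1 + (Y2 + Y3) * (Z2 + 𝒜.deg (S.star q))) * S.sg q
          * (psign ((Y3 + X2 + 𝒜.deg (S.star p)) * (Z1 + (𝒜.deg (S.star q) + Y2))
              + Y3 * (X2 + 𝒜.deg p)) * S.sg (S.star p))) = 0 := by
  subst hdr hds hdt
  have hPs : 𝒜.deg (S.star p) = d - 2 - 𝒜.deg p := by have := S.deg_star p; linarith
  have hQs : 𝒜.deg (S.star q) = d - 2 - 𝒜.deg q := by have := S.deg_star q; linarith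
  by_cases hc : S.star p = p ∧ Even (𝒜.deg p)
  · have h0 : S.sg p = 0 := S.sg_self p hc.1 hc.2
    rw [hc.1, h0]; ring
  · have hc' : S.star p ≠ p ∨ Odd (𝒜.deg p) := by
      rcases not_and_or.mp hc with h | h
      · exact Or.inl h
      · exact Or.inr (Int.not_even_iff_odd.mp h)
    have master := parity_main X1 X2 Y1 Y2 Y3 Z1 Z2 (𝒜.deg p) (𝒜.deg q) d
    rw [hPs, hQs]
    rcases S.sg_pair p hc' with ⟨hsp, hsps⟩ | ⟨hsp, hsps⟩ <;>
      rw [hsp, hsps, hPs] <;>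
      exact psign_sum_shape _ _ _ _ _ _ _ _ (odd_shift master (by ring))

lemma tm_cancel (f g h : List 𝒜.E → k) (r s t : ℤ)
    (hf : 𝒜.IsDeg f r) (hg : 𝒜.IsDeg g s) (hh : 𝒜.IsDeg h t)
    (x y z : List 𝒜.E) (i0 j0 i1 j1 : ℕ) (p q : 𝒜.E) (hi1 : i1 ≤ j0) :
    S.tmA f g h x y z i0 j0 i1 j1 p q
      = -(((psign ((r + d) * (s + t) + 𝒜.degsum x * (𝒜.degsum y + 𝒜.degsum z)) : ℤ) : k)
          * S.tmB g h f y z x i1 j1 (j0 - i1) i0 q (S.star p)) := by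
  rw [StarData.tmA, StarData.tmB, S.star_star, Nat.add_sub_cancel' hi1]
  rw [show (z.take j1 ++ S.star q :: (y.drop i1).take (j0 - i1)) ++ S.star p :: x.drop i0
      = z.take j1 ++ S.star q :: ((y.drop i1).take (j0 - i1) ++ S.star p :: x.drop i0) from by
    simp [List.append_assoc]]
  by_cases h1 : f (x.take i0 ++ p :: y.drop j0) = 0
  · rw [h1]; ring
  by_cases h2 : g (y.take i1 ++ q :: z.drop j1) = 0
  · rw [h2]; ring
  by_cases h3 : h (z.take j1 ++ S.star q ::
      ((y.drop i1).take (j0 - i1) ++ S.star p :: x.drop i0)) = 0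
  · rw [h3]; ring
  have hdr := hf _ h1
  have hds := hg _ h2
  have hdt := hh _ h3
  simp only [AInftyCat.degsum_append, AInftyCat.degsum_cons] at hdr hds hdt ⊢
  rw [𝒜.degsum_take_drop x i0, 𝒜.degsum_take_drop z j1, 𝒜.degsum_take_drop y i1,
    𝒜.degsum_drop_split y hi1]
  have key := S.sign_key p q (𝒜.degsum (x.take i0)) (𝒜.degsum (x.drop i0))
    (𝒜.degsum (y.take i1)) (𝒜.degsum ((y.drop i1).take (j0 - i1)))
    (𝒜.degsum (y.drop j0)) (𝒜.degsum (z.take j1)) (𝒜.degsum (z.drop j1))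
    r s t hdr hds hdt
  have hkey := congrArg (fun n : ℤ => (n : k)) key
  simp only [Int.cast_zero] at hkey
  linear_combination (norm := (push_cast; ring1))
    (f (x.take i0 ++ p :: y.drop j0) * g (y.take i1 ++ q :: z.drop j1)
      * h (z.take j1 ++ S.star q :: ((y.drop i1).take (j0 - i1) ++ S.star p :: x.drop i0)) : k)
      * hkey

/-- Cancellation of the A-part of one cyclic term against the B-part of the
next cyclic term. -/
lemma sumA_add_sumB (f g h : List 𝒜.E → k) (r s t : ℤ)
    (hf : 𝒜.IsDeg f r) (hg : 𝒜.IsDeg g s) (hh : 𝒜.IsDeg h t)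
    (x y z : List 𝒜.E) (hx : x ≠ []) (hy : y ≠ []) (hz : z ≠ []) :
    S.sumA f g h x y z hx hy hz
      + ((psign ((r + d) * (s + t) + 𝒜.degsum x * (𝒜.degsum y + 𝒜.degsum z)) : ℤ) : k)
        * S.sumB g h f y z x hy hz hx = 0 := by
  rw [add_eq_zero_iff_eq_neg]
  unfold sumA sumB
  simp only [Finset.mul_sum]
  simp only [← Finset.sum_neg_distrib]
  simp only [Finset.sum_sigma']
  refine Finset.sum_bij'
    (fun a _ => ⟨a.2.2.2.1, a.2.2.2.2.1, a.2.2.2.2.2, a.2.1 - a.2.2.2.1, a.1,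
      S.star a.2.2.1⟩)
    (fun b _ => ⟨b.2.2.2.2.1, b.1 + b.2.2.2.1, S.star b.2.2.2.2.2, b.1, b.2.1,
      b.2.2.1⟩) ?_ ?_ ?_ ?_ ?_
  · rintro ⟨i0, j0, p, i1, j1, q⟩ ha
    simp only [Finset.mem_sigma, Finset.mem_range] at ha ⊢
    obtain ⟨h1, h2, h3, h4, h5, h6⟩ := ha
    have hi1 : i1 ≤ j0 := by omega
    refine ⟨by omega, by omega, h6, by omega, by omega, ?_⟩
    have h7 : i1 + (j0 - i1) = j0 := by omega
    rw [h7]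
    exact S.star_mem h3
  · rintro ⟨i0', j0', p', e', j1', q'⟩ hb
    simp only [Finset.mem_sigma, Finset.mem_range] at hb ⊢
    obtain ⟨h1, h2, h3, h4, h5, h6⟩ := hb
    exact ⟨by omega, by omega, S.star_mem h6, by omega, by omega, h3⟩
  · rintro ⟨i0, j0, p, i1, j1, q⟩ ha
    simp only [Finset.mem_sigma, Finset.mem_range] at ha
    obtain ⟨h1, h2, h3, h4, h5, h6⟩ := ha
    dsimp only
    simp only [S.star_star]
    have h7 : i1 + (j0 - i1) = j0 := by omega
    rw [h7]
  · rintro ⟨i0', j0', p', e', j1', q'⟩ hb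
    simp only [Finset.mem_sigma, Finset.mem_range] at hb
    obtain ⟨h1, h2, h3, h4, h5, h6⟩ := hb
    dsimp only
    simp only [S.star_star]
    have h7 : i0' + e' - i0' = e' := by omega
    rw [h7]
  · rintro ⟨i0, j0, p, i1, j1, q⟩ ha
    simp only [Finset.mem_sigma, Finset.mem_range] at ha
    obtain ⟨h1, h2, h3, h4, h5, h6⟩ := ha
    exact S.tm_cancel f g h r s t hf hg hh x y z i0 j0 i1 j1 p q (by omega)

end StarData

end JacobiProof

/-- Under Assumption (★) with parameter `d`, the double
bracket `{{−,−}}` on `B̃(𝒜)^∨` satisfies the graded double Jacobi identity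
`{{f,{{g,h}}}}_L + (−1)^{(|f|+d)(|g|+|h|)} σ₍₁₂₃₎{{g,{{h,f}}}}_L
 + (−1)^{(|h|+d)(|f|+|g|)} σ₍₁₃₂₎{{h,{{f,g}}}}_L = 0`
in the completed triple tensor product (expressed on functionals on triples of
composable words; the cyclic permutations `σ₍₁₂₃₎`, `σ₍₁₃₂₎` act with their
Koszul signs, which on a triple of words `(x,y,z)` read
`σ₍₁₂₃₎H (x,y,z) = (−1)^{|x|(|y|+|z|)} H(y,z,x)` and
`σ₍₁₃₂₎H (x,y,z) = (−1)^{|z|(|x|+|y|)} H(z,x,y)`). -/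
theorem double_bracket_jacobi {k : Type} [Field k] [CharZero k]
    {𝒜 : AInftyCat k} (h𝒜 : 𝒜.IsAInfty) {d : ℤ} (hd : 0 < d) (S : StarData 𝒜 d) :
    ∀ (f g h : List 𝒜.E → k) (r s t : ℤ),
      f ∈ 𝒜.DualSp → g ∈ 𝒜.DualSp → h ∈ 𝒜.DualSp →
      𝒜.IsDeg f r → 𝒜.IsDeg g s → 𝒜.IsDeg h t →
      ∀ x y z : List 𝒜.E, x ≠ [] → y ≠ [] → z ≠ [] →
        𝒜.Composable x → 𝒜.Composable y → 𝒜.Composable z →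
        S.dbrL f (S.dbr g h) x y z
          + ((psign ((r + d) * (s + t))
                * psign (𝒜.degsum x * (𝒜.degsum y + 𝒜.degsum z)) : ℤ) : k)
              * S.dbrL g (S.dbr h f) y z x
          + ((psign ((t + d) * (r + s))
                * psign (𝒜.degsum z * (𝒜.degsum x + 𝒜.degsum y)) : ℤ) : k)
              * S.dbrL h (S.dbr f g) z x y = 0 := by
  intro f g h r s t hfD hgD hhD hf hg hh x y z hx hy hz hcx hcy hcz
  rw [S.dbrL_split f g h x y z hx hy hz, S.dbrL_split g h f y z x hy hz hx,
    S.dbrL_split h f g z x y hz hx hy]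
  have K1 := S.sumA_add_sumB f g h r s t hf hg hh x y z hx hy hz
  have K2 := S.sumA_add_sumB g h f s t r hg hh hf y z x hy hz hx
  have K3 := S.sumA_add_sumB h f g t r s hh hf hg z x y hz hx hy
  set Dx := 𝒜.degsum x with hDx
  set Dy := 𝒜.degsum y with hDy
  set Dz := 𝒜.degsum z with hDz
  -- ℤ-level sign facts
  have e3sq : psign ((t + d) * (r + s) + Dz * (Dx + Dy))
      * psign ((t + d) * (r + s) + Dz * (Dx + Dy)) = 1 := by
    rw [psign_mul_psign]
    exact psign_even ⟨(t + d) * (r + s) + Dz * (Dx + Dy), by ring⟩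
  have e123 : psign ((r + d) * (s + t) + Dx * (Dy + Dz))
      * psign ((s + d) * (t + r) + Dy * (Dz + Dx))
      * psign ((t + d) * (r + s) + Dz * (Dx + Dy)) = 1 := by
    rw [psign_mul_psign, psign_mul_psign]
    exact psign_even ⟨r * s + s * t + t * r + d * (r + s + t)
      + Dx * Dy + Dy * Dz + Dz * Dx, by ring⟩
  have hgammaZ : psign ((t + d) * (r + s) + Dz * (Dx + Dy))
      = psign ((r + d) * (s + t) + Dx * (Dy + Dz))
        * psign ((s + d) * (t + r) + Dy * (Dz + Dx)) := by
    linear_combination psign ((r + d) * (s + t) + Dx * (Dy + Dz))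
        * psign ((s + d) * (t + r) + Dy * (Dz + Dx)) * e3sq
      - psign ((t + d) * (r + s) + Dz * (Dx + Dy)) * e123
  have hssZ : (psign ((r + d) * (s + t) + Dx * (Dy + Dz))
        * psign ((s + d) * (t + r) + Dy * (Dz + Dx)))
      * (psign ((r + d) * (s + t) + Dx * (Dy + Dz))
        * psign ((s + d) * (t + r) + Dy * (Dz + Dx))) = 1 := by
    rw [psign_mul_psign, psign_mul_psign]
    exact psign_even ⟨((r + d) * (s + t) + Dx * (Dy + Dz))
      + ((s + d) * (t + r) + Dy * (Dz + Dx)), by ring⟩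
  -- k-level coefficients
  set g1 : k := ((psign ((r + d) * (s + t) + Dx * (Dy + Dz)) : ℤ) : k) with hg1
  set g2 : k := ((psign ((s + d) * (t + r) + Dy * (Dz + Dx)) : ℤ) : k) with hg2
  set g3 : k := ((psign ((t + d) * (r + s) + Dz * (Dx + Dy)) : ℤ) : k) with hg3
  have hc2 : ((psign ((r + d) * (s + t)) * psign (Dx * (Dy + Dz)) : ℤ) : k) = g1 := by
    rw [psign_mul_psign, hg1]
  have hc3 : ((psign ((t + d) * (r + s)) * psign (Dz * (Dx + Dy)) : ℤ) : k) = g3 := by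
    rw [psign_mul_psign, hg3]
  have hgam : g3 = g1 * g2 := by
    rw [hg1, hg2, hg3, ← Int.cast_mul]
    exact_mod_cast congrArg (fun n : ℤ => (n : k)) hgammaZ
  have hss : (g1 * g2) * (g1 * g2) = 1 := by
    rw [hg1, hg2, ← Int.cast_mul, ← Int.cast_mul]
    exact_mod_cast congrArg (fun n : ℤ => (n : k)) hssZ
  rw [hc2, hc3, hgam]
  rw [hgam] at K3
  linear_combination K1 + g1 * K2 + g1 * g2 * K3
    - S.sumB f g h x y z hx hy hz * hss

end AIC
end

section
/- Let (A, ∂) be a (possibly complete) DG double Poisson algebra of degree d over a field k of characteristic zero, with double bracket {{−,−}}, and set {a,b} := μ({{a,b}}), where μ is the multiplication of A. Then {−,−} descends to the graded commutator quotient A_♮ = A/[A,A] and makes (A_♮, ∂, {−,−}) a DG Lie algebra of degree d: the induced bracket has degree d, satisfies the shifted graded antisymmetry {ā,b̄} = −(−1)^{(|a|+d)(|b|+d)}{b̄,ā}, satisfies the shifted graded Jacobi identity, and the induced differential is a derivation of the induced bracket. -/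
/-!
DG double Poisson algebras in the sense of Van den Bergh, over a field `k` of
characteristic zero.  `A` is a ℤ-graded associative `k`-algebra; the double
bracket `{{−,−}} : A ⊗ A → A ⊗ A` has degree `d`, is a graded derivation of
degree `d` in its second argument for the outer bimodule structure, is graded
skew-symmetric, satisfies the graded double Jacobi identity, and commutes with
the differential `∂` (which acts on tensor products as a derivation).  The
Koszul switching map `(u ⊗ v)° = (−1)^{|u||v|} v ⊗ u` and the signed cyclic
permutations on the triple tensor product are part of the data, pinned down by
their values on homogeneous pure tensors.
-/

set_option maxSynthPendingDepth 3

open TensorProduct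

namespace DPA

/-- The sign `(−1)^z` for an integer `z`. -/
def psign (z : ℤ) : ℤ := if Even z then 1 else -1

/-- A DG double Poisson algebra of degree `d` (Van den Bergh). -/
structure DGDoublePoisson (k : Type) [Field k] (A : Type) [Ring A] [Algebra k A]
    (d : ℤ) where
  /-- the ℤ-grading of `A` -/
  grading : ℤ → Submodule k A
  gradedAlgebra : GradedAlgebra grading
  /-- the double bracket `{{−,−}} : A ⊗ A → A ⊗ A` -/
  br : A →ₗ[k] A →ₗ[k] A ⊗[k] A
  /-- the Koszul switch `(u ⊗ v)° = (−1)^{|u||v|} v ⊗ u` -/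
  tau : A ⊗[k] A →ₗ[k] A ⊗[k] A
  tau_spec : ∀ (i j : ℤ) (a b : A), a ∈ grading i → b ∈ grading j →
    tau (a ⊗ₜ[k] b) = psign (i * j) • (b ⊗ₜ[k] a)
  /-- `{{−,−}}` has degree `d` -/
  br_deg : ∀ (i j : ℤ) (a b : A), a ∈ grading i → b ∈ grading j →
    br a b ∈ ⨆ p : ℤ, LinearMap.range
      (TensorProduct.map (grading p).subtype (grading (i + j + d - p)).subtype)
  /-- graded skew-symmetry `{{a,b}} = −(−1)^{(|a|+d)(|b|+d)} {{b,a}}°` -/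
  skew : ∀ (i j : ℤ) (a b : A), a ∈ grading i → b ∈ grading j →
    br a b = -(psign ((i + d) * (j + d)) • tau (br b a))
  /-- graded derivation of degree `d` in the second argument, for the outer
  bimodule structure on `A ⊗ A` -/
  deriv : ∀ (i j : ℤ) (a b c : A), a ∈ grading i → b ∈ grading j →
    br a (b * c) =
      TensorProduct.map LinearMap.id (LinearMap.mulRight k c) (br a b)
        + psign ((i + d) * j) •
            TensorProduct.map (LinearMap.mulLeft k b) LinearMap.id (br a c)
  /-- the signed cyclic permutation `σ₍₁₂₃₎` on `A ⊗ A ⊗ A` -/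
  sigma123 : A ⊗[k] (A ⊗[k] A) →ₗ[k] A ⊗[k] (A ⊗[k] A)
  sigma123_spec : ∀ (i j l : ℤ) (a b c : A),
    a ∈ grading i → b ∈ grading j → c ∈ grading l →
    sigma123 (a ⊗ₜ[k] (b ⊗ₜ[k] c)) = psign (l * (i + j)) • (c ⊗ₜ[k] (a ⊗ₜ[k] b))
  /-- the signed cyclic permutation `σ₍₁₃₂₎` on `A ⊗ A ⊗ A` -/
  sigma132 : A ⊗[k] (A ⊗[k] A) →ₗ[k] A ⊗[k] (A ⊗[k] A)
  sigma132_spec : ∀ (i j l : ℤ) (a b c : A),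
    a ∈ grading i → b ∈ grading j → c ∈ grading l →
    sigma132 (a ⊗ₜ[k] (b ⊗ₜ[k] c)) = psign (i * (j + l)) • (b ⊗ₜ[k] (c ⊗ₜ[k] a))
  /-- the graded double Jacobi identity
  `{{a,{{b,c}}}}_L + (−1)^{(|a|+d)(|b|+|c|)} σ₍₁₂₃₎{{b,{{c,a}}}}_L
    + (−1)^{(|c|+d)(|a|+|b|)} σ₍₁₃₂₎{{c,{{a,b}}}}_L = 0`,
  where `{{x, u ⊗ v}}_L = {{x,u}} ⊗ v` -/
  jacobi : ∀ (i j l : ℤ) (a b c : A),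
    a ∈ grading i → b ∈ grading j → c ∈ grading l →
    TensorProduct.assoc k A A A (TensorProduct.map (br a) LinearMap.id (br b c))
      + psign ((i + d) * (j + l)) •
          sigma123 (TensorProduct.assoc k A A A
            (TensorProduct.map (br b) LinearMap.id (br c a)))
      + psign ((l + d) * (i + j)) •
          sigma132 (TensorProduct.assoc k A A A
            (TensorProduct.map (br c) LinearMap.id (br a b))) = 0
  /-- the differential -/
  partialD : A →ₗ[k] A
  partialD_sq : ∀ x : A, partialD (partialD x) = 0
  partialD_deg : ∀ (i : ℤ) (a : A), a ∈ grading i → partialD a ∈ grading (i + 1)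
  leibniz : ∀ (i : ℤ) (a b : A), a ∈ grading i →
    partialD (a * b) = partialD a * b + psign i • (a * partialD b)
  /-- the extension of `∂` to `A ⊗ A` as a derivation -/
  D2 : A ⊗[k] A →ₗ[k] A ⊗[k] A
  D2_spec : ∀ (i : ℤ) (a b : A), a ∈ grading i →
    D2 (a ⊗ₜ[k] b) = partialD a ⊗ₜ[k] b + psign i • (a ⊗ₜ[k] partialD b)
  /-- the double bracket commutes with the differential -/
  compat : ∀ (i : ℤ) (a b : A), a ∈ grading i →
    D2 (br a b) = br (partialD a) b + psign i • br a (partialD b)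

variable {k A : Type} [Field k] [Ring A] [Algebra k A] {d : ℤ}

/-- The graded commutator subspace `[A,A]`, spanned by the graded commutators
of homogeneous elements. -/
def commSub (P : DGDoublePoisson k A d) : Submodule k A :=
  Submodule.span k
    {x | ∃ (i j : ℤ) (a b : A), a ∈ P.grading i ∧ b ∈ P.grading j ∧
      x = a * b - psign (i * j) • (b * a)}

end DPA

namespace DPA


/-! ### sign lemmas -/

lemma psign_mul_psign (x y : ℤ) : psign x * psign y = psign (x + y) := by
  unfold psign
  by_cases hx : Even x <;> by_cases hy : Even y <;>
    simp [Int.even_add, hx, hy]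

lemma psign_congr {x y : ℤ} (h : Even (x - y)) : psign x = psign y := by
  unfold psign
  rw [Int.even_sub] at h
  simp [h]

lemma psign_sq (x : ℤ) : psign x * psign x = 1 := by
  unfold psign; split <;> ring

lemma psign_smul_smul {M : Type*} [AddCommGroup M] (x y : ℤ) (m : M) :
    psign x • psign y • m = psign (x + y) • m := by
  rw [smul_smul, psign_mul_psign]

variable {k A : Type} [Field k] [Ring A] [Algebra k A] {d : ℤ}

/-! ### span lemmas -/

lemma grading_span_top (P : DGDoublePoisson k A d) :
    Submodule.span k {x : A | ∃ i, x ∈ P.grading i} = ⊤ := by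
  haveI := P.gradedAlgebra
  rw [eq_top_iff, ← (DirectSum.Decomposition.isInternal P.grading).submodule_iSup_eq_top]
  exact iSup_le fun i x hx => Submodule.subset_span ⟨i, hx⟩

lemma span2 (P : DGDoublePoisson k A d) :
    Submodule.span k {x : A ⊗[k] A | ∃ (p q : ℤ) (u v : A),
      u ∈ P.grading p ∧ v ∈ P.grading q ∧ x = u ⊗ₜ[k] v} = ⊤ := by
  rw [eq_top_iff, ← TensorProduct.span_tmul_eq_top k A A, Submodule.span_le]
  rintro _ ⟨a, b, rfl⟩
  have ha : a ∈ Submodule.span k {x : A | ∃ i, x ∈ P.grading i} := by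
    rw [grading_span_top P]; trivial
  induction ha using Submodule.span_induction with
  | mem a hmem =>
    obtain ⟨p, hp⟩ := hmem
    have hb : b ∈ Submodule.span k {x : A | ∃ i, x ∈ P.grading i} := by
      rw [grading_span_top P]; trivial
    induction hb using Submodule.span_induction with
    | mem b hb =>
      obtain ⟨q, hq⟩ := hb
      exact Submodule.subset_span ⟨p, q, a, b, hp, hq, rfl⟩
    | zero => rw [tmul_zero]; exact Submodule.zero_mem _
    | add x y _ _ hx hy => rw [tmul_add]; exact Submodule.add_mem _ hx hy
    | smul c x _ hx => rw [tmul_smul]; exact Submodule.smul_mem _ c hx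
  | zero => rw [zero_tmul]; exact Submodule.zero_mem _
  | add x y _ _ hx hy => rw [add_tmul]; exact Submodule.add_mem _ hx hy
  | smul c x _ hx => rw [← smul_tmul']; exact Submodule.smul_mem _ c hx

/-! ### commutator membership -/

lemma comm_mem (P : DGDoublePoisson k A d) {p q : ℤ} {u v : A}
    (hu : u ∈ P.grading p) (hv : v ∈ P.grading q) :
    u * v - psign (p * q) • (v * u) ∈ commSub P :=
  Submodule.subset_span ⟨p, q, u, v, hu, hv, rfl⟩

/-! ### degree of the bracket -/

lemma mu_br_mem (P : DGDoublePoisson k A d) {i j : ℤ} {a b : A}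
    (hi : a ∈ P.grading i) (hj : b ∈ P.grading j) :
    LinearMap.mul' k A (P.br a b) ∈ P.grading (i + j + d) := by
  haveI := P.gradedAlgebra
  have h := P.br_deg i j a b hi hj
  have hle : (⨆ p : ℤ, LinearMap.range
      (TensorProduct.map (P.grading p).subtype (P.grading (i + j + d - p)).subtype)) ≤
      (P.grading (i + j + d)).comap (LinearMap.mul' k A) := by
    refine iSup_le fun p => ?_
    rw [TensorProduct.range_map_eq_span_tmul, Submodule.span_le]
    rintro _ ⟨u, v, rfl⟩
    simp only [SetLike.mem_coe, Submodule.mem_comap, LinearMap.mul'_apply,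
      Submodule.coe_subtype]
    have h2 := SetLike.mul_mem_graded u.2 v.2
    have h3 : p + (i + j + d - p) = i + j + d := by ring
    rwa [h3] at h2
  exact hle h

/-! ### multiplication-by-tau congruence -/

lemma mu_tau (P : DGDoublePoisson k A d) (t : A ⊗[k] A) :
    LinearMap.mul' k A (P.tau t) - LinearMap.mul' k A t ∈ commSub P := by
  have htop : t ∈ (⊤ : Submodule k (A ⊗[k] A)) := trivial
  rw [← span2 P] at htop
  have hle : Submodule.span k {x : A ⊗[k] A | ∃ (p q : ℤ) (u v : A),
      u ∈ P.grading p ∧ v ∈ P.grading q ∧ x = u ⊗ₜ[k] v} ≤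
      ((commSub P).comap ((LinearMap.mul' k A).comp P.tau - LinearMap.mul' k A)) := by
    refine Submodule.span_le.mpr ?_
    rintro _ ⟨p, q, u, v, hu, hv, rfl⟩
    simp only [SetLike.mem_coe, Submodule.mem_comap, LinearMap.sub_apply,
      LinearMap.comp_apply, LinearMap.mul'_apply, P.tau_spec p q u v hu hv,
      map_zsmul]
    have hc := comm_mem P hu hv
    have : psign (p * q) • (v * u) - u * v
        = -(u * v - psign (p * q) • (v * u)) := by abel
    rw [this]
    exact neg_mem hc
  simpa using hle htop

/-! ### triple multiplication and the left bracket map -/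

/-- multiplication `A ⊗ (A ⊗ A) → A`. -/
noncomputable def M3 (k A : Type) [Field k] [Ring A] [Algebra k A] : A ⊗[k] (A ⊗[k] A) →ₗ[k] A :=
  (LinearMap.mul' k A).comp (TensorProduct.map LinearMap.id (LinearMap.mul' k A))

lemma M3_tmul (x : A) (y z : A) :
    M3 k A (x ⊗ₜ[k] (y ⊗ₜ[k] z)) = x * (y * z) := by
  simp [M3]

/-- `t ↦ μ({{x, t₁}}) ⊗ t₂` followed by total multiplication. -/
noncomputable def Fm (P : DGDoublePoisson k A d) (x : A) : A ⊗[k] A →ₗ[k] A :=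
  (M3 k A).comp ((TensorProduct.assoc k A A A).toLinearMap.comp
    (TensorProduct.map (P.br x) LinearMap.id))

lemma M3_assoc_tmul (t : A ⊗[k] A) (v : A) :
    M3 k A (TensorProduct.assoc k A A A (t ⊗ₜ[k] v)) = LinearMap.mul' k A t * v := by
  induction t with
  | zero => simp
  | tmul x y => simp [M3, mul_assoc]
  | add x y hx hy =>
    rw [add_tmul, map_add, map_add, map_add, add_mul, hx, hy]

lemma Fm_tmul (P : DGDoublePoisson k A d) (x u v : A) :
    Fm P x (u ⊗ₜ[k] v) = LinearMap.mul' k A (P.br x u) * v := by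
  simp only [Fm, LinearMap.comp_apply, TensorProduct.map_tmul, LinearMap.id_coe, id_eq,
    LinearEquiv.coe_coe]
  exact M3_assoc_tmul (P.br x u) v

/-! ### span of homogeneous triple tensors -/

lemma span3 (P : DGDoublePoisson k A d) :
    Submodule.span k {x : A ⊗[k] (A ⊗[k] A) | ∃ (p q r : ℤ) (u v w : A),
      u ∈ P.grading p ∧ v ∈ P.grading q ∧ w ∈ P.grading r ∧
      x = u ⊗ₜ[k] (v ⊗ₜ[k] w)} = ⊤ := by
  rw [eq_top_iff, ← TensorProduct.span_tmul_eq_top k A (A ⊗[k] A), Submodule.span_le]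
  rintro _ ⟨a, t, rfl⟩
  have ha : a ∈ Submodule.span k {x : A | ∃ i, x ∈ P.grading i} := by
    rw [grading_span_top P]; trivial
  induction ha using Submodule.span_induction with
  | mem a hmem =>
    obtain ⟨p, hp⟩ := hmem
    have ht : t ∈ Submodule.span k {x : A ⊗[k] A | ∃ (p q : ℤ) (u v : A),
        u ∈ P.grading p ∧ v ∈ P.grading q ∧ x = u ⊗ₜ[k] v} := by
      rw [span2 P]; trivial
    induction ht using Submodule.span_induction with
    | mem s hs =>
      obtain ⟨q, r, v, w, hv, hw, rfl⟩ := hs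
      exact Submodule.subset_span ⟨p, q, r, a, v, w, hp, hv, hw, rfl⟩
    | zero => rw [tmul_zero]; exact Submodule.zero_mem _
    | add x y _ _ hx hy => rw [tmul_add]; exact Submodule.add_mem _ hx hy
    | smul c x _ hx => rw [tmul_smul]; exact Submodule.smul_mem _ c hx
  | zero => rw [zero_tmul]; exact Submodule.zero_mem _
  | add x y _ _ hx hy => rw [add_tmul]; exact Submodule.add_mem _ hx hy
  | smul c x _ hx => rw [← smul_tmul']; exact Submodule.smul_mem _ c hx

/-! ### the cyclic permutations are trivial after multiplication, mod commutators -/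

lemma M3_sigma123 (P : DGDoublePoisson k A d) (s : A ⊗[k] (A ⊗[k] A)) :
    M3 k A (P.sigma123 s) - M3 k A s ∈ commSub P := by
  haveI := P.gradedAlgebra
  have htop : s ∈ (⊤ : Submodule k (A ⊗[k] (A ⊗[k] A))) := trivial
  rw [← span3 P] at htop
  have hle : Submodule.span k {x : A ⊗[k] (A ⊗[k] A) | ∃ (p q r : ℤ) (u v w : A),
      u ∈ P.grading p ∧ v ∈ P.grading q ∧ w ∈ P.grading r ∧
      x = u ⊗ₜ[k] (v ⊗ₜ[k] w)} ≤
      ((commSub P).comap ((M3 k A).comp P.sigma123 - M3 k A)) := by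
    refine Submodule.span_le.mpr ?_
    rintro _ ⟨p, q, r, u, v, w, hu, hv, hw, rfl⟩
    simp only [SetLike.mem_coe, Submodule.mem_comap, LinearMap.sub_apply,
      LinearMap.comp_apply, P.sigma123_spec p q r u v w hu hv hw, map_zsmul,
      M3_tmul]
    have hc := comm_mem P (SetLike.mul_mem_graded hu hv) hw
    have hpe : psign (r * (p + q)) = psign ((p + q) * r) := by rw [mul_comm]
    have he : psign (r * (p + q)) • (w * (u * v)) - u * (v * w)
        = -(u * v * w - psign ((p + q) * r) • (w * (u * v))) := by
      rw [hpe, mul_assoc]; abel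
    rw [he]
    exact neg_mem hc
  simpa using hle htop

lemma M3_sigma132 (P : DGDoublePoisson k A d) (s : A ⊗[k] (A ⊗[k] A)) :
    M3 k A (P.sigma132 s) - M3 k A s ∈ commSub P := by
  haveI := P.gradedAlgebra
  have htop : s ∈ (⊤ : Submodule k (A ⊗[k] (A ⊗[k] A))) := trivial
  rw [← span3 P] at htop
  have hle : Submodule.span k {x : A ⊗[k] (A ⊗[k] A) | ∃ (p q r : ℤ) (u v w : A),
      u ∈ P.grading p ∧ v ∈ P.grading q ∧ w ∈ P.grading r ∧
      x = u ⊗ₜ[k] (v ⊗ₜ[k] w)} ≤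
      ((commSub P).comap ((M3 k A).comp P.sigma132 - M3 k A)) := by
    refine Submodule.span_le.mpr ?_
    rintro _ ⟨p, q, r, u, v, w, hu, hv, hw, rfl⟩
    simp only [SetLike.mem_coe, Submodule.mem_comap, LinearMap.sub_apply,
      LinearMap.comp_apply, P.sigma132_spec p q r u v w hu hv hw, map_zsmul,
      M3_tmul]
    have hc := comm_mem P hu (SetLike.mul_mem_graded hv hw)
    have he : psign (p * (q + r)) • (v * (w * u)) - u * (v * w)
        = -(u * (v * w) - psign (p * (q + r)) • (v * w * u)) := by
      rw [mul_assoc]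
      abel
    rw [he]
    exact neg_mem hc
  simpa using hle htop

/-! ### auxiliary multiplication lemmas -/

lemma mu_map_right (v : A) (s : A ⊗[k] A) :
    LinearMap.mul' k A (TensorProduct.map LinearMap.id (LinearMap.mulRight k v) s)
      = LinearMap.mul' k A s * v := by
  induction s with
  | zero => simp
  | tmul x y => simp [mul_assoc]
  | add x y hx hy => rw [map_add, map_add, map_add, add_mul, hx, hy]

lemma mu_map_left (u : A) (s : A ⊗[k] A) :
    LinearMap.mul' k A (TensorProduct.map (LinearMap.mulLeft k u) LinearMap.id s)
      = u * LinearMap.mul' k A s := by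
  induction s with
  | zero => simp
  | tmul x y => simp [mul_assoc]
  | add x y hx hy => rw [map_add, map_add, map_add, mul_add, hx, hy]

/-! ### skew-symmetry, solved for `tau` -/

lemma tau_br (P : DGDoublePoisson k A d) {i j : ℤ} {a b : A}
    (hi : a ∈ P.grading i) (hj : b ∈ P.grading j) :
    P.tau (P.br a b) = -(psign ((i + d) * (j + d)) • P.br b a) := by
  have h := P.skew j i b a hj hi
  rw [h, smul_neg, neg_neg, smul_smul, psign_mul_psign]
  have : psign ((i + d) * (j + d) + (j + d) * (i + d)) = 1 := by
    have : Even ((i + d) * (j + d) + (j + d) * (i + d)) := ⟨(i+d)*(j+d), by ring⟩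
    simp [psign, this]
  rw [this, one_smul]

/-! ### the derivation property after multiplication -/

lemma G_decomp (P : DGDoublePoisson k A d) {i : ℤ} {a : A} (hi : a ∈ P.grading i)
    (t : A ⊗[k] A) :
    LinearMap.mul' k A (P.br a (LinearMap.mul' k A t))
      - Fm P a t - Fm P a (P.tau t) ∈ commSub P := by
  haveI := P.gradedAlgebra
  have htop : t ∈ (⊤ : Submodule k (A ⊗[k] A)) := trivial
  rw [← span2 P] at htop
  have hle : Submodule.span k {x : A ⊗[k] A | ∃ (p q : ℤ) (u v : A),
      u ∈ P.grading p ∧ v ∈ P.grading q ∧ x = u ⊗ₜ[k] v} ≤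
      ((commSub P).comap ((LinearMap.mul' k A).comp ((P.br a).comp (LinearMap.mul' k A))
        - Fm P a - (Fm P a).comp P.tau)) := by
    refine Submodule.span_le.mpr ?_
    rintro _ ⟨p, q, u, v, hu, hv, rfl⟩
    simp only [SetLike.mem_coe, Submodule.mem_comap, LinearMap.sub_apply,
      LinearMap.comp_apply, LinearMap.mul'_apply, P.tau_spec p q u v hu hv, map_zsmul,
      Fm_tmul, P.deriv i p a u v hi hu, map_add, mu_map_right, mu_map_left]
    have hw : LinearMap.mul' k A (P.br a v) ∈ P.grading (i + q + d) := mu_br_mem P hi hv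
    have hc := comm_mem P hu hw
    have he : LinearMap.mul' k A (P.br a u) * v
          + psign ((i + d) * p) • (u * LinearMap.mul' k A (P.br a v))
          - LinearMap.mul' k A (P.br a u) * v
          - psign (p * q) • (LinearMap.mul' k A (P.br a v) * u)
        = psign ((i + d) * p) •
            (u * LinearMap.mul' k A (P.br a v)
              - psign (p * (i + q + d)) • (LinearMap.mul' k A (P.br a v) * u)) := by
      rw [smul_sub, smul_smul, psign_mul_psign]
      have : psign ((i + d) * p + p * (i + q + d)) = psign (p * q) :=
        psign_congr ⟨i * p + d * p, by ring⟩
      rw [this]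
      abel
    rw [he]
    exact zsmul_mem hc _
  simpa using hle htop

/-! ### the differential commutes with multiplication -/

lemma mu_D2 (P : DGDoublePoisson k A d) (t : A ⊗[k] A) :
    LinearMap.mul' k A (P.D2 t) = P.partialD (LinearMap.mul' k A t) := by
  have htop : t ∈ (⊤ : Submodule k (A ⊗[k] A)) := trivial
  rw [← span2 P] at htop
  have hle : Submodule.span k {x : A ⊗[k] A | ∃ (p q : ℤ) (u v : A),
      u ∈ P.grading p ∧ v ∈ P.grading q ∧ x = u ⊗ₜ[k] v} ≤
      LinearMap.ker ((LinearMap.mul' k A).comp P.D2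
        - P.partialD.comp (LinearMap.mul' k A)) := by
    refine Submodule.span_le.mpr ?_
    rintro _ ⟨p, q, u, v, hu, hv, rfl⟩
    simp only [SetLike.mem_coe, LinearMap.mem_ker, LinearMap.sub_apply,
      LinearMap.comp_apply, LinearMap.mul'_apply, P.D2_spec p u v hu, map_add,
      map_zsmul, P.leibniz p u v hu]
    abel
  have := hle htop
  rw [LinearMap.mem_ker, LinearMap.sub_apply, LinearMap.comp_apply, LinearMap.comp_apply,
    sub_eq_zero] at this
  exact this

lemma Fm_eq {k A : Type} [Field k] [Ring A] [Algebra k A] {d : ℤ}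
    (P : DGDoublePoisson k A d) (x : A) (t : A ⊗[k] A) :
    M3 k A (TensorProduct.assoc k A A A (TensorProduct.map (P.br x) LinearMap.id t))
      = Fm P x t := rfl

set_option maxHeartbeats 1000000 in
/-- **Van den Bergh.** Let `(A, ∂)` be a DG double Poisson
algebra of degree `d` over a field `k` of characteristic zero, and set
`{a,b} := μ({{a,b}})`.  Then `{−,−}` descends to the graded commutator
quotient `A_♮ = A/[A,A]` and makes `(A_♮, ∂, {−,−})` a DG Lie algebra of
degree `d`: `[A,A]` is stable under `∂` and under the bracket (so everything
descends), the induced bracket has degree `d`, satisfies the shifted graded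
antisymmetry and the shifted graded Jacobi identity modulo `[A,A]`, and the
induced differential is a derivation of the induced bracket. -/
theorem dg_lie_on_commutator_quotient {k A : Type} [Field k] [CharZero k]
    [Ring A] [Algebra k A] {d : ℤ} (P : DGDoublePoisson k A d) :
    -- [A,A] is stable under ∂
    (∀ x ∈ commSub P, P.partialD x ∈ commSub P) ∧
    -- the bracket of anything with a commutator is a commutator
    (∀ (a : A), ∀ c ∈ commSub P,
      LinearMap.mul' k A (P.br a c) ∈ commSub P ∧
      LinearMap.mul' k A (P.br c a) ∈ commSub P) ∧
    -- the bracket has degree d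
    (∀ (i j : ℤ) (a b : A), a ∈ P.grading i → b ∈ P.grading j →
      LinearMap.mul' k A (P.br a b) ∈ P.grading (i + j + d)) ∧
    -- shifted graded antisymmetry modulo [A,A]
    (∀ (i j : ℤ) (a b : A), a ∈ P.grading i → b ∈ P.grading j →
      LinearMap.mul' k A (P.br a b)
        + psign ((i + d) * (j + d)) • LinearMap.mul' k A (P.br b a) ∈ commSub P) ∧
    -- shifted graded Jacobi identity (Leibniz form) modulo [A,A]
    (∀ (i j l : ℤ) (a b c : A),
      a ∈ P.grading i → b ∈ P.grading j → c ∈ P.grading l →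
      LinearMap.mul' k A (P.br a (LinearMap.mul' k A (P.br b c)))
        - LinearMap.mul' k A (P.br (LinearMap.mul' k A (P.br a b)) c)
        - psign ((i + d) * (j + d)) •
            LinearMap.mul' k A (P.br b (LinearMap.mul' k A (P.br a c)))
        ∈ commSub P) ∧
    -- the induced differential is a derivation of the induced bracket
    (∀ (i : ℤ) (a b : A), a ∈ P.grading i →
      P.partialD (LinearMap.mul' k A (P.br a b))
        - LinearMap.mul' k A (P.br (P.partialD a) b)
        - psign i • LinearMap.mul' k A (P.br a (P.partialD b)) ∈ commSub P) := by
  refine ⟨?_, ?_, ?_, ?_, ?_, ?_⟩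
  · -- [A,A] is stable under ∂
    intro x hx
    have hle : commSub P ≤ (commSub P).comap P.partialD := by
      rw [commSub, Submodule.span_le]
      rintro _ ⟨i, j, a, b, ha, hb, rfl⟩
      simp only [SetLike.mem_coe, Submodule.mem_comap, map_sub, map_zsmul,
        P.leibniz i a b ha, P.leibniz j b a hb]
      have X := comm_mem P (P.partialD_deg i a ha) hb
      have Y := comm_mem P ha (P.partialD_deg j b hb)
      have key : P.partialD a * b + psign i • (a * P.partialD b)
          - psign (i*j) • (P.partialD b * a + psign j • (b * P.partialD a))
          = (P.partialD a * b - psign ((i+1)*j) • (b * P.partialD a))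
            + psign i • (a * P.partialD b - psign (i*(j+1)) • (P.partialD b * a)) := by
        rcases em (Even i) with hi' | hi' <;> rcases em (Even j) with hj' | hj' <;>
          simp [psign, Int.even_mul, Int.even_add, Int.even_sub, parity_simps, hi', hj',
            ← Int.not_even_iff_odd] <;>
          module
      rw [key]
      exact add_mem X (zsmul_mem Y _)
    exact hle hx
  · -- bracket with a commutator
      intro a c hc
      have hmem : a ∈ Submodule.span k {x : A | ∃ i, x ∈ P.grading i} := by
        rw [grading_span_top P]; trivial
      induction hmem using Submodule.span_induction with
      | mem a ha =>
        obtain ⟨i, hi⟩ := ha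
        have hc' : c ∈ Submodule.span k
            {x : A | ∃ (i j : ℤ) (a b : A), a ∈ P.grading i ∧ b ∈ P.grading j ∧
              x = a * b - psign (i * j) • (b * a)} := hc
        clear hc
        induction hc' using Submodule.span_induction with
        | mem c hcm =>
          obtain ⟨p, q, u, v, hu, hv, rfl⟩ := hcm
          have hmut : LinearMap.mul' k A ((u ⊗ₜ[k] v : A ⊗[k] A) - psign (p*q) • (v ⊗ₜ[k] u))
              = u * v - psign (p*q) • (v * u) := by
            rw [map_sub, map_zsmul, LinearMap.mul'_apply, LinearMap.mul'_apply]
          have htau : P.tau ((u ⊗ₜ[k] v : A ⊗[k] A) - psign (p*q) • (v ⊗ₜ[k] u))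
              = -((u ⊗ₜ[k] v : A ⊗[k] A) - psign (p*q) • (v ⊗ₜ[k] u)) := by
            simp only [map_sub, map_zsmul, P.tau_spec p q u v hu hv, P.tau_spec q p v u hv hu,
              smul_smul, mul_comm q p, psign_sq, one_smul]
            abel
          have hG := G_decomp P hi ((u ⊗ₜ[k] v : A ⊗[k] A) - psign (p*q) • (v ⊗ₜ[k] u))
          rw [htau, map_neg, sub_neg_eq_add, sub_add_cancel, hmut] at hG
          refine ⟨hG, ?_⟩
          have hcg : u * v - psign (p*q) • (v * u) ∈ P.grading (p + q) := by
            haveI := P.gradedAlgebra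
            have h1 := SetLike.mul_mem_graded hu hv
            have h2 := SetLike.mul_mem_graded hv hu
            rw [add_comm q p] at h2
            exact sub_mem h1 (zsmul_mem h2 _)
          have hskw := P.skew (p+q) i (u * v - psign (p*q) • (v * u)) a hcg hi
          have h2 := mu_tau P (P.br a (u * v - psign (p*q) • (v * u)))
          rw [hskw, map_neg, map_zsmul]
          refine neg_mem (zsmul_mem ?_ _)
          have := add_mem h2 hG
          rwa [sub_add_cancel] at this
        | zero =>
          constructor <;> simp
        | add x y _ _ ihx ihy =>
          exact ⟨by rw [map_add, map_add]; exact add_mem ihx.1 ihy.1,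
            by rw [map_add, LinearMap.add_apply, map_add]; exact add_mem ihx.2 ihy.2⟩
        | smul r x _ ihx =>
          exact ⟨by rw [map_smul, map_smul]; exact Submodule.smul_mem _ r ihx.1,
            by rw [map_smul, LinearMap.smul_apply, map_smul]; exact Submodule.smul_mem _ r ihx.2⟩
      | zero =>
        constructor <;> simp
      | add x y _ _ ihx ihy =>
        exact ⟨by rw [map_add, LinearMap.add_apply, map_add]; exact add_mem ihx.1 ihy.1,
          by rw [map_add, map_add]; exact add_mem ihx.2 ihy.2⟩
      | smul r x _ ihx =>
        exact ⟨by rw [map_smul, LinearMap.smul_apply, map_smul]; exact Submodule.smul_mem _ r ihx.1,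
          by rw [map_smul, map_smul]; exact Submodule.smul_mem _ r ihx.2⟩
  · -- degree of the bracket
    exact fun i j a b hi hj => mu_br_mem P hi hj
  · -- shifted graded antisymmetry
      intro i j a b hi hj
      rw [P.skew i j a b hi hj, map_neg, map_zsmul]
      have h := mu_tau P (P.br b a)
      have key : -(psign ((i+d)*(j+d)) • LinearMap.mul' k A (P.tau (P.br b a)))
          + psign ((i+d)*(j+d)) • LinearMap.mul' k A (P.br b a)
          = -(psign ((i+d)*(j+d)) • (LinearMap.mul' k A (P.tau (P.br b a))
              - LinearMap.mul' k A (P.br b a))) := by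
        rw [smul_sub]; abel
      rw [key]
      exact neg_mem (zsmul_mem h _)
  · -- shifted graded Jacobi identity
      intro i j l a b c hi hj hl
      have q_eq : ∀ x y : A, x - y ∈ commSub P → (commSub P).mkQ x = (commSub P).mkQ y := by
        intro x y h
        rw [Submodule.mkQ_apply, Submodule.mkQ_apply, Submodule.Quotient.eq]
        exact h
      -- reduce the goal to an equation in the quotient
      suffices hq : (commSub P).mkQ (LinearMap.mul' k A (P.br a (LinearMap.mul' k A (P.br b c)))
            - LinearMap.mul' k A (P.br (LinearMap.mul' k A (P.br a b)) c)
            - psign ((i + d) * (j + d)) •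
                LinearMap.mul' k A (P.br b (LinearMap.mul' k A (P.br a c)))) = 0 by
        rwa [Submodule.mkQ_apply, Submodule.Quotient.mk_eq_zero] at hq
      rw [map_sub, map_sub, map_zsmul]
      -- hA1 : π {a,{b,c}}
      have hA1 : (commSub P).mkQ (LinearMap.mul' k A (P.br a (LinearMap.mul' k A (P.br b c))))
          = (commSub P).mkQ (Fm P a (P.br b c))
            - psign ((j+d)*(l+d)) • (commSub P).mkQ (Fm P a (P.br c b)) := by
        have h := q_eq _ _ (by rw [sub_add_eq_sub_sub]; exact G_decomp P hi (P.br b c))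
        rw [tau_br P hj hl] at h
        simp only [map_add, map_neg, map_zsmul] at h
        rw [h]; abel
      -- hA2 : π {b,{a,c}}
      have hA2 : (commSub P).mkQ (LinearMap.mul' k A (P.br b (LinearMap.mul' k A (P.br a c))))
          = (commSub P).mkQ (Fm P b (P.br a c))
            - psign ((i+d)*(l+d)) • (commSub P).mkQ (Fm P b (P.br c a)) := by
        have h := q_eq _ _ (by rw [sub_add_eq_sub_sub]; exact G_decomp P hj (P.br a c))
        rw [tau_br P hi hl] at h
        simp only [map_add, map_neg, map_zsmul] at h
        rw [h]; abel
      -- hA3 : π {{a,b},c}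
      have hw := mu_br_mem P hi hj
      have hA3 : (commSub P).mkQ (LinearMap.mul' k A (P.br (LinearMap.mul' k A (P.br a b)) c))
          = -(psign ((i+j+d+d)*(l+d)) •
              ((commSub P).mkQ (Fm P c (P.br a b))
                - psign ((i+d)*(j+d)) • (commSub P).mkQ (Fm P c (P.br b a)))) := by
        have hskw := P.skew (i+j+d) l (LinearMap.mul' k A (P.br a b)) c hw hl
        have h1 := congrArg (fun z => (commSub P).mkQ (LinearMap.mul' k A z)) hskw
        simp only [map_neg, map_zsmul] at h1
        have hmt := q_eq _ _ (mu_tau P (P.br c (LinearMap.mul' k A (P.br a b))))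
        rw [hmt] at h1
        have h2 := q_eq _ _ (by rw [sub_add_eq_sub_sub]; exact G_decomp P hl (P.br a b))
        rw [tau_br P hi hj] at h2
        simp only [map_add, map_neg, map_zsmul] at h2
        rw [h1, h2]
        have : (i+j+d+d) = (i+j+d)+d := by ring
        rw [this]
        abel
      -- the two Jacobi identities, pushed to the quotient
      have hj1 := congrArg (fun z => (commSub P).mkQ (M3 k A z)) (P.jacobi i j l a b c hi hj hl)
      simp only [map_add, map_zsmul, map_zero] at hj1
      rw [q_eq _ _ (M3_sigma123 P _), q_eq _ _ (M3_sigma132 P _), Fm_eq, Fm_eq, Fm_eq] at hj1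
      have hj2 := congrArg (fun z => (commSub P).mkQ (M3 k A z)) (P.jacobi i l j a c b hi hl hj)
      simp only [map_add, map_zsmul, map_zero] at hj2
      rw [q_eq _ _ (M3_sigma123 P _), q_eq _ _ (M3_sigma132 P _), Fm_eq, Fm_eq, Fm_eq] at hj2
      -- solve for the two leading terms
      rw [add_assoc, add_eq_zero_iff_eq_neg] at hj1 hj2
      rw [hA1, hA2, hA3, hj1, hj2]
      match_scalars <;>
      · rcases em (Even i) with hi' | hi' <;> rcases em (Even j) with hj' | hj' <;>
          rcases em (Even l) with hl' | hl' <;> rcases em (Even d) with hd' | hd' <;>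
          simp [psign, Int.even_mul, Int.even_add, Int.even_sub, parity_simps, hi', hj',
            hl', hd'] <;>
          ring
  · -- the differential is a derivation of the bracket
    intro i a b hi
    have h := P.compat i a b hi
    have h2 := congrArg (LinearMap.mul' k A) h
    rw [mu_D2 P] at h2
    rw [h2, map_add, map_zsmul]
    have : LinearMap.mul' k A (P.br (P.partialD a) b)
        + psign i • LinearMap.mul' k A (P.br a (P.partialD b))
        - LinearMap.mul' k A (P.br (P.partialD a) b)
        - psign i • LinearMap.mul' k A (P.br a (P.partialD b)) = 0 := by abel
    rw [this]
    exact zero_mem _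

end DPA
end
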